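/- arXiv:1810.01293 — 12 statements merged into one kernel-verified Lean document; each statement's English description precedes it below -/
import Mathlib

section
/- Let D be a finite set of positive integers, q : D → ℝ with q_k > 0 for all k ∈ D and Σ_{k∈D} q_k = 1, and δ : D → ℝ with δ_k > 0 for all k. Call x : D → [0,1] a stationary state if δ_k x_k = (1 − x_k) · k · Σ_{i∈D} q_i x_i for every k ∈ D. Then the all-zero map x ≡ 0 is the unique stationary state if and only if R := Σ_{k∈D} k q_k / δ_k ≤ 1. -/
/-- For the degree-based mean-field SIS dynamics on a network with
degree set `D` (positive integers), neighbor-degree weights `q` (positive, summing to 1)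
and curing rates `δ` (positive), the all-zero map is the unique stationary state
(among profiles `x : D → [0,1]` with `δ_k x_k = (1 - x_k) k Σ_i q_i x_i`)
if and only if `R = Σ_k k q_k / δ_k ≤ 1`. -/
theorem zero_unique_stationary_iff_R_le_one
    (D : Finset ℕ) (hD : ∀ k ∈ D, 0 < k)
    (q : ℕ → ℝ) (hq : ∀ k ∈ D, 0 < q k) (hqsum : ∑ k ∈ D, q k = 1)
    (δ : ℕ → ℝ) (hδ : ∀ k ∈ D, 0 < δ k) :
    (∀ x : ℕ → ℝ,
        (∀ k ∈ D, x k ∈ Set.Icc (0 : ℝ) 1) →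
        (∀ k ∈ D, δ k * x k = (1 - x k) * (k : ℝ) * ∑ i ∈ D, q i * x i) →
        ∀ k ∈ D, x k = 0)
      ↔ ∑ k ∈ D, (k : ℝ) * q k / δ k ≤ 1 := by
  constructor
  · -- uniqueness → R ≤ 1
    intro huniq
    by_contra hR
    push_neg at hR
    have hDne : D.Nonempty := by
      rcases D.eq_empty_or_nonempty with h | h
      · rw [h] at hR; simp at hR; linarith
      · exact h
    set h : ℝ → ℝ := fun θ => ∑ k ∈ D, q k * ((k : ℝ) / (δ k + k * θ)) with hh
    have hpos : ∀ k ∈ D, ∀ θ : ℝ, 0 ≤ θ → 0 < δ k + (k : ℝ) * θ := by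
      intro k hk θ hθ
      have h1 := hδ k hk
      have h2 : (0:ℝ) ≤ (k : ℝ) := Nat.cast_nonneg k
      nlinarith
    have hcont : ContinuousOn h (Set.Icc (0:ℝ) 2) := by
      apply continuousOn_finset_sum
      intro k hk
      apply ContinuousOn.mul continuousOn_const
      apply ContinuousOn.div continuousOn_const
      · fun_prop
      · intro θ hθ; exact (hpos k hk θ hθ.1).ne'
    have h0 : h 0 = ∑ k ∈ D, (k:ℝ) * q k / δ k := by
      simp only [hh, mul_zero, add_zero]
      exact Finset.sum_congr rfl fun k hk => by ring
    have h2lt : h 2 < 1 := by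
      have hterm : ∀ k ∈ D, q k * ((k : ℝ) / (δ k + k * 2)) < q k * (1/2) := by
        intro k hk
        have hd := hδ k hk
        have hkpos : (0:ℝ) < (k:ℝ) := by exact_mod_cast hD k hk
        have hden : (0:ℝ) < δ k + k * 2 := by linarith
        have : (k : ℝ) / (δ k + k * 2) < 1/2 := by
          rw [div_lt_div_iff₀ hden (by norm_num)]
          linarith
        exact mul_lt_mul_of_pos_left this (hq k hk)
      calc h 2 < ∑ k ∈ D, q k * (1/2) := Finset.sum_lt_sum_of_nonempty hDne hterm
        _ = 1/2 := by rw [← Finset.sum_mul, hqsum]; norm_num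
        _ < 1 := by norm_num
    have hsub := intermediate_value_Icc' (by norm_num : (0:ℝ) ≤ 2) hcont
    obtain ⟨θ, hθmem, hθeq⟩ := hsub ⟨h2lt.le, by rw [h0]; linarith⟩
    have hθpos : 0 < θ := by
      rcases eq_or_lt_of_le hθmem.1 with hz | hp
      · exfalso; rw [← hz] at hθeq; rw [h0] at hθeq; linarith
      · exact hp
    set x : ℕ → ℝ := fun k => (k : ℝ) * θ / (δ k + k * θ) with hx
    have hxmem : ∀ k ∈ D, x k ∈ Set.Icc (0:ℝ) 1 := by
      intro k hk
      have hd := hpos k hk θ hθpos.le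
      constructor
      · exact div_nonneg (mul_nonneg (Nat.cast_nonneg k) hθpos.le) hd.le
      · rw [div_le_one hd]; linarith [(hδ k hk)]
    have hsum : ∑ i ∈ D, q i * x i = θ := by
      have : ∑ i ∈ D, q i * x i = θ * h θ := by
        rw [hh, Finset.mul_sum]
        exact Finset.sum_congr rfl fun i hi => by rw [hx]; ring
      rw [this, hθeq, mul_one]
    have heqs : ∀ k ∈ D, δ k * x k = (1 - x k) * (k : ℝ) * ∑ i ∈ D, q i * x i := by
      intro k hk
      rw [hsum, hx]
      have hd := (hpos k hk θ hθpos.le).ne'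
      field_simp
      ring
    obtain ⟨k, hk⟩ := hDne
    have hzero := huniq x hxmem heqs k hk
    have hkpos : (0:ℝ) < (k:ℝ) := by exact_mod_cast hD k hk
    have : 0 < x k :=
      div_pos (mul_pos hkpos hθpos) (hpos k hk θ hθpos.le)
    rw [hzero] at this; exact lt_irrefl 0 this
  · -- R ≤ 1 → uniqueness
    intro hR x hxmem heq k hk
    set θ := ∑ i ∈ D, q i * x i with hθ
    have hθ0 : 0 ≤ θ :=
      Finset.sum_nonneg fun i hi => mul_nonneg (hq i hi).le (hxmem i hi).1
    rcases eq_or_lt_of_le hθ0 with hz | hp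
    · have hek := heq k hk
      rw [← hz, mul_zero] at hek
      have := hδ k hk
      have hx0 := (hxmem k hk).1
      nlinarith
    · exfalso
      have hDne : D.Nonempty := by
        rcases D.eq_empty_or_nonempty with h | h
        · rw [hθ, h] at hp; simp at hp
        · exact h
      have key : ∀ i ∈ D, q i * x i < q i * ((i:ℝ) * θ / δ i) := by
        intro i hi
        have hei := heq i hi
        have hdi := hδ i hi
        have hipos : (0:ℝ) < (i:ℝ) := by exact_mod_cast hD i hi
        have hxi := hxmem i hi
        -- δ_i x_i = (1 - x_i) i θ  and x_i > 0
        have hxipos : 0 < x i := by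
          rcases eq_or_lt_of_le hxi.1 with h0 | h0
          · exfalso; rw [← h0, mul_zero] at hei
            nlinarith [mul_pos hipos hp]
          · exact h0
        have hlt : δ i * x i < (i:ℝ) * θ := by
          nlinarith [mul_pos (mul_pos hxipos hipos) hp]
        have : x i < (i:ℝ) * θ / δ i := by
          rw [lt_div_iff₀ hdi]; nlinarith
        exact mul_lt_mul_of_pos_left this (hq i hi)
      have h1 : θ < ∑ i ∈ D, q i * ((i:ℝ) * θ / δ i) := by
        rw [hθ]; exact Finset.sum_lt_sum_of_nonempty hDne key
      have h2 : ∑ i ∈ D, q i * ((i:ℝ) * θ / δ i) = θ * ∑ i ∈ D, (i:ℝ) * q i / δ i := by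
        rw [Finset.mul_sum]
        exact Finset.sum_congr rfl fun i hi => by ring
      have h3 : θ * ∑ i ∈ D, (i:ℝ) * q i / δ i ≤ θ * 1 :=
        mul_le_mul_of_nonneg_left hR hp.le
      rw [mul_one] at h3
      linarith [h1, h2.le, h2.ge]
end

section
/- Let D be a finite set of positive integers, q : D → ℝ with q_k > 0 for all k ∈ D and Σ_{k∈D} q_k = 1, and δ : D → ℝ with δ_k > 0 for all k. Suppose R := Σ_{k∈D} k q_k / δ_k ≤ 1. Then for any solution x : [0,∞) → (D → ℝ) of the DBMF dynamics, i.e. x_k(t) ∈ [0,1] for all t ≥ 0 and k ∈ D, and for each k the function t ↦ x_k(t) is differentiable with x_k'(t) = −δ_k x_k(t) + (1 − x_k(t)) · k · Σ_{i∈D} q_i x_i(t) for all t ≥ 0, one has x_k(t) → 0 as t → ∞ for every k ∈ D (the disease-free state is globally asymptotically stable). -/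
/-!
`V = Σ_i (q_i / δ_i) x_i` is a Lyapunov function. Along the dynamics
`V' = y (R - 1) - y S ≤ -y S`, where `y = Σ_i q_i x_i` and `S = Σ_i i (q_i / δ_i) x_i`.
Since every degree is at least `1`, `S ≥ V`, and `y ≥ m V` with `m = min_i δ_i`, so
`V' ≤ -m V²`. Hence `V` decreases to `0`, and each `x_k ≤ (δ_k / q_k) V` follows it.
-/

open Filter Set Topology

section DerivativeBounds

variable {f f' : ℝ → ℝ} {a : ℝ}

theorem antitoneOn_Ici_of_hasDerivWithinAt_nonpos
    (hf : ∀ t ≥ a, HasDerivWithinAt f (f' t) (Ici a) t) (hf' : ∀ t ≥ a, f' t ≤ 0) :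
    AntitoneOn f (Ici a) := by
  refine antitoneOn_of_hasDerivWithinAt_nonpos (f' := f') (convex_Ici a)
    (fun t ht => (hf t ht).continuousWithinAt) (fun t ht => ?_) (fun t ht => ?_)
  · rw [interior_Ici] at ht ⊢
    exact (hf t ht.le).mono Ioi_subset_Ici_self
  · rw [interior_Ici] at ht
    exact hf' t ht.le

theorem le_sub_mul_of_hasDerivWithinAt_le_neg {c : ℝ}
    (hf : ∀ t ≥ a, HasDerivWithinAt f (f' t) (Ici a) t) (hf' : ∀ t ≥ a, f' t ≤ -c)
    {t : ℝ} (ht : a ≤ t) : f t ≤ f a - c * (t - a) := by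
  have hg : AntitoneOn (fun s => f s + c * s) (Ici a) :=
    antitoneOn_Ici_of_hasDerivWithinAt_nonpos
      (fun s hs => (hf s hs).add ((hasDerivWithinAt_id s _).const_mul c))
      (fun s hs => by linarith [hf' s hs])
  have := hg self_mem_Ici ht ht
  simp only at this
  linarith

theorem tendsto_zero_of_hasDerivWithinAt_le_neg_mul_sq {c : ℝ} (hc : 0 < c)
    (hf₀ : ∀ t ≥ 0, 0 ≤ f t) (hf : ∀ t ≥ 0, HasDerivWithinAt f (f' t) (Ici 0) t)
    (hf' : ∀ t ≥ 0, f' t ≤ -c * f t ^ 2) :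
    Tendsto f atTop (𝓝 0) := by
  have hanti : AntitoneOn f (Ici 0) :=
    antitoneOn_Ici_of_hasDerivWithinAt_nonpos hf
      (fun t ht => (hf' t ht).trans (by nlinarith [sq_nonneg (f t)]))
  have hsmall : ∀ ε > 0, ∃ T ≥ 0, f T < ε := by
    intro ε hε
    by_contra! hlarge
    have hdecay : ∀ t ≥ 0, f t ≤ f 0 - c * ε ^ 2 * t := fun t ht => by
      simpa using le_sub_mul_of_hasDerivWithinAt_le_neg hf (fun s hs => by
        nlinarith [hf' s hs, mul_le_mul_of_nonneg_left
          (pow_le_pow_left₀ hε.le (hlarge s hs) 2) hc.le]) ht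
    have hcε : 0 < c * ε ^ 2 := by positivity
    set T := f 0 / (c * ε ^ 2) + 1
    have hT : 0 ≤ T := by have := hf₀ 0 le_rfl; positivity
    have hcT : c * ε ^ 2 * T = f 0 + c * ε ^ 2 := by simp only [T]; field_simp
    linarith [hdecay T hT, hf₀ T hT]
  refine tendsto_order.2 ⟨fun b hb => ?_, fun ε hε => ?_⟩
  · filter_upwards [eventually_ge_atTop 0] with t ht
    exact hb.trans_le (hf₀ t ht)
  · obtain ⟨T, hT, hfT⟩ := hsmall ε hε
    filter_upwards [eventually_ge_atTop T] with t ht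
    exact (hanti (mem_Ici.2 hT) (mem_Ici.2 (hT.trans ht)) ht).trans_lt hfT

end DerivativeBounds

section DBMF

variable (D : Finset ℕ) (q δ : ℕ → ℝ)

def dbmfField (x : ℕ → ℝ) (k : ℕ) : ℝ :=
  -δ k * x k + (1 - x k) * (k : ℝ) * ∑ i ∈ D, q i * x i

noncomputable def dbmfLyapunov (x : ℕ → ℝ) : ℝ :=
  ∑ i ∈ D, q i / δ i * x i

variable {D q δ} {x : ℕ → ℝ}

theorem dbmfLyapunov_summand_nonneg (hq : ∀ i ∈ D, 0 ≤ q i) (hδ : ∀ i ∈ D, 0 ≤ δ i)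
    (hx : ∀ i ∈ D, 0 ≤ x i) {i : ℕ} (hi : i ∈ D) : 0 ≤ q i / δ i * x i :=
  mul_nonneg (div_nonneg (hq i hi) (hδ i hi)) (hx i hi)

theorem dbmfLyapunov_nonneg (hq : ∀ i ∈ D, 0 ≤ q i) (hδ : ∀ i ∈ D, 0 ≤ δ i)
    (hx : ∀ i ∈ D, 0 ≤ x i) : 0 ≤ dbmfLyapunov D q δ x :=
  Finset.sum_nonneg fun _ hi => dbmfLyapunov_summand_nonneg hq hδ hx hi

theorem le_mul_dbmfLyapunov (hq : ∀ i ∈ D, 0 < q i) (hδ : ∀ i ∈ D, 0 < δ i)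
    (hx : ∀ i ∈ D, 0 ≤ x i) {k : ℕ} (hk : k ∈ D) :
    x k ≤ δ k / q k * dbmfLyapunov D q δ x := by
  have hterm : q k / δ k * x k ≤ dbmfLyapunov D q δ x :=
    Finset.single_le_sum (f := fun i => q i / δ i * x i) (fun _ hi =>
      dbmfLyapunov_summand_nonneg (fun i hi => (hq i hi).le) (fun i hi => (hδ i hi).le) hx hi)
      hk
  have hqk := (hq k hk).ne'
  have hδk := (hδ k hk).ne'
  calc x k = δ k / q k * (q k / δ k * x k) := by field_simp
    _ ≤ δ k / q k * dbmfLyapunov D q δ x := by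
      gcongr
      exact (div_pos (hδ k hk) (hq k hk)).le

theorem sum_mul_dbmfField_eq (hδ : ∀ i ∈ D, 0 < δ i) :
    ∑ i ∈ D, q i / δ i * dbmfField D q δ x i =
      (∑ i ∈ D, q i * x i) *
        (∑ i ∈ D, (i : ℝ) * q i / δ i - 1 - ∑ i ∈ D, (i : ℝ) * q i / δ i * x i) := by
  have hterm : ∀ i ∈ D, q i / δ i * dbmfField D q δ x i =
      (i : ℝ) * q i / δ i * (∑ j ∈ D, q j * x j) - q i * x i -
        (i : ℝ) * q i / δ i * x i * (∑ j ∈ D, q j * x j) := by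
    intro i hi
    have := (hδ i hi).ne'
    simp only [dbmfField]
    field_simp
    ring
  rw [Finset.sum_congr rfl hterm, Finset.sum_sub_distrib, Finset.sum_sub_distrib,
    ← Finset.sum_mul, ← Finset.sum_mul]
  ring

theorem mul_dbmfLyapunov_le {m : ℝ} (hm : ∀ i ∈ D, m ≤ δ i) (hq : ∀ i ∈ D, 0 ≤ q i)
    (hδ : ∀ i ∈ D, 0 < δ i) (hx : ∀ i ∈ D, 0 ≤ x i) :
    m * dbmfLyapunov D q δ x ≤ ∑ i ∈ D, q i * x i := by
  rw [dbmfLyapunov, Finset.mul_sum]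
  refine Finset.sum_le_sum fun i hi => ?_
  have hqx := dbmfLyapunov_summand_nonneg hq (fun i hi => (hδ i hi).le) hx hi
  have hδi := (hδ i hi).ne'
  calc m * (q i / δ i * x i) ≤ δ i * (q i / δ i * x i) :=
        mul_le_mul_of_nonneg_right (hm i hi) hqx
    _ = q i * x i := by field_simp

theorem dbmfLyapunov_le_sum_mul (hD : ∀ i ∈ D, 0 < i) (hq : ∀ i ∈ D, 0 ≤ q i)
    (hδ : ∀ i ∈ D, 0 ≤ δ i) (hx : ∀ i ∈ D, 0 ≤ x i) :
    dbmfLyapunov D q δ x ≤ ∑ i ∈ D, (i : ℝ) * q i / δ i * x i := by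
  refine Finset.sum_le_sum fun i hi => ?_
  have hi1 : (1 : ℝ) ≤ i := by exact_mod_cast hD i hi
  have hqx := dbmfLyapunov_summand_nonneg hq hδ hx hi
  calc q i / δ i * x i ≤ (i : ℝ) * (q i / δ i * x i) := le_mul_of_one_le_left hqx hi1
    _ = (i : ℝ) * q i / δ i * x i := by ring

theorem sum_mul_dbmfField_le (hD : ∀ i ∈ D, 0 < i) (hq : ∀ i ∈ D, 0 ≤ q i)
    (hδ : ∀ i ∈ D, 0 < δ i) (hR : ∑ i ∈ D, (i : ℝ) * q i / δ i ≤ 1)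
    {m : ℝ} (hm : ∀ i ∈ D, m ≤ δ i) (hx : ∀ i ∈ D, 0 ≤ x i) :
    ∑ i ∈ D, q i / δ i * dbmfField D q δ x i ≤ -m * dbmfLyapunov D q δ x ^ 2 := by
  have hV := dbmfLyapunov_nonneg hq (fun i hi => (hδ i hi).le) hx
  have hy := mul_dbmfLyapunov_le hm hq hδ hx
  have hS := dbmfLyapunov_le_sum_mul hD hq (fun i hi => (hδ i hi).le) hx
  have hy₀ : 0 ≤ ∑ i ∈ D, q i * x i :=
    Finset.sum_nonneg fun i hi => mul_nonneg (hq i hi) (hx i hi)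
  rw [sum_mul_dbmfField_eq hδ]
  nlinarith [mul_le_mul hy hS hV hy₀]

end DBMF

theorem disease_free_globally_asymptotically_stable_general
    (D : Finset ℕ) (hD : ∀ k ∈ D, 0 < k)
    (q : ℕ → ℝ) (hq : ∀ k ∈ D, 0 < q k)
    (δ : ℕ → ℝ) (hδ : ∀ k ∈ D, 0 < δ k)
    (hR : ∑ k ∈ D, (k : ℝ) * q k / δ k ≤ 1)
    (x : ℝ → ℕ → ℝ)
    (hx01 : ∀ t ≥ (0 : ℝ), ∀ k ∈ D, x t k ∈ Set.Icc (0 : ℝ) 1)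
    (hdyn : ∀ k ∈ D, ∀ t ≥ (0 : ℝ),
      HasDerivWithinAt (fun s => x s k)
        (-δ k * x t k + (1 - x t k) * (k : ℝ) * ∑ i ∈ D, q i * x t i)
        (Set.Ici (0 : ℝ)) t) :
    ∀ k ∈ D, Filter.Tendsto (fun t => x t k) Filter.atTop (nhds 0) := by
  intro k hk
  have hq₀ : ∀ i ∈ D, 0 ≤ q i := fun i hi => (hq i hi).le
  have hx₀ : ∀ t ≥ (0 : ℝ), ∀ i ∈ D, 0 ≤ x t i := fun t ht i hi => (hx01 t ht i hi).1
  set m := D.inf' ⟨k, hk⟩ δ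
  have hm₀ : 0 < m := (Finset.lt_inf'_iff _).2 hδ
  have hV : Tendsto (fun t => dbmfLyapunov D q δ (x t)) atTop (𝓝 0) :=
    tendsto_zero_of_hasDerivWithinAt_le_neg_mul_sq hm₀
      (fun t ht => dbmfLyapunov_nonneg hq₀ (fun i hi => (hδ i hi).le) (hx₀ t ht))
      (fun t ht => HasDerivWithinAt.fun_sum fun i hi => (hdyn i hi t ht).const_mul _)
      (fun t ht => sum_mul_dbmfField_le hD hq₀ hδ hR
        (fun i hi => Finset.inf'_le δ hi) (hx₀ t ht))
  refine squeeze_zero' ?_ ?_ (by simpa using hV.const_mul (δ k / q k))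
  · filter_upwards [eventually_ge_atTop 0] with t ht
    exact hx₀ t ht k hk
  · filter_upwards [eventually_ge_atTop 0] with t ht
    exact le_mul_dbmfLyapunov hq hδ (hx₀ t ht) hk

/-- If `R = Σ_k k q_k / δ_k ≤ 1` then along any solution of the
degree-based mean-field SIS dynamics
`x_k'(t) = -δ_k x_k(t) + (1 - x_k(t)) k Σ_i q_i x_i(t)` on `[0,∞)` with values in `[0,1]`,
every coordinate `x_k(t)` tends to `0` as `t → ∞` (the disease-free state is globally
asymptotically stable). -/
theorem disease_free_globally_asymptotically_stable
    (D : Finset ℕ) (hD : ∀ k ∈ D, 0 < k)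
    (q : ℕ → ℝ) (hq : ∀ k ∈ D, 0 < q k) (hqsum : ∑ k ∈ D, q k = 1)
    (δ : ℕ → ℝ) (hδ : ∀ k ∈ D, 0 < δ k)
    (hR : ∑ k ∈ D, (k : ℝ) * q k / δ k ≤ 1)
    (x : ℝ → ℕ → ℝ)
    (hx01 : ∀ t ≥ (0 : ℝ), ∀ k ∈ D, x t k ∈ Set.Icc (0 : ℝ) 1)
    (hdyn : ∀ k ∈ D, ∀ t ≥ (0 : ℝ),
      HasDerivWithinAt (fun s => x s k)
        (-δ k * x t k + (1 - x t k) * (k : ℝ) * ∑ i ∈ D, q i * x t i)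
        (Set.Ici (0 : ℝ)) t) :
    ∀ k ∈ D, Filter.Tendsto (fun t => x t k) Filter.atTop (nhds 0) :=
  disease_free_globally_asymptotically_stable_general D hD q hq δ hδ hR x hx01 hdyn
end

section
/- Let D be a finite set of positive integers, q : D → ℝ with q_k > 0 for all k ∈ D and Σ_{k∈D} q_k = 1, and δ : D → ℝ with δ_k > 0 for all k. Call x : D → [0,1] a stationary state if δ_k x_k = (1 − x_k) · k · Σ_{i∈D} q_i x_i for every k ∈ D. Then there exists a stationary state x with x_k > 0 for all k ∈ D (an endemic state) if and only if R := Σ_{k∈D} k q_k / δ_k > 1; moreover, when R > 1 the endemic state is unique: any two stationary states that are componentwise positive coincide. -/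
/-!
Write `Θ = ∑ q_i x_i`. Stationarity at degree `k` is linear in `x_k` once `Θ` is fixed, and forces
`x_k = k Θ / (δ_k + k Θ)`. Feeding this back into the definition of `Θ` shows that the endemic
states correspond exactly to the positive roots of `response Θ = 1`, where
`response Θ = ∑ q_i i / (δ_i + i Θ)`. This function is strictly decreasing on `[0, ∞)`, with
`response 0 = R` and `response 1 < ∑ q_i = 1`, so a positive root exists iff `R > 1`, and it is then unique.
-/

open Finset

namespace DBMF

def IsStationary (D : Finset ℕ) (q δ x : ℕ → ℝ) : Prop :=
  ∀ k ∈ D, δ k * x k = (1 - x k) * (k : ℝ) * ∑ i ∈ D, q i * x i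

noncomputable def response (D : Finset ℕ) (q δ : ℕ → ℝ) (Θ : ℝ) : ℝ :=
  ∑ i ∈ D, q i * i / (δ i + i * Θ)

noncomputable def endemicProfile (δ : ℕ → ℝ) (Θ : ℝ) (k : ℕ) : ℝ :=
  k * Θ / (δ k + k * Θ)

lemma mul_eq_one_sub_mul_iff_eq_div {δ k Θ x : ℝ} (h : δ + k * Θ ≠ 0) :
    δ * x = (1 - x) * k * Θ ↔ x = k * Θ / (δ + k * Θ) := by
  rw [eq_div_iff h]
  constructor <;> intro h <;> linarith

variable {D : Finset ℕ} {q δ : ℕ → ℝ}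

lemma sum_mul_endemicProfile (Θ : ℝ) :
    ∑ i ∈ D, q i * endemicProfile δ Θ i = Θ * response D q δ Θ := by
  rw [response, mul_sum]
  exact sum_congr rfl fun i _ => by unfold endemicProfile; ring

lemma response_zero : response D q δ 0 = ∑ k ∈ D, (k : ℝ) * q k / δ k := by
  simp only [response, mul_zero, add_zero, mul_comm]

lemma add_mul_pos (hδ : ∀ k ∈ D, 0 < δ k) {Θ : ℝ} (hΘ : 0 ≤ Θ) {i : ℕ} (hi : i ∈ D) :
    0 < δ i + i * Θ := by
  have := hδ i hi
  positivity

lemma response_strictAntiOn (hD : ∀ k ∈ D, 0 < k) (hq : ∀ k ∈ D, 0 < q k)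
    (hδ : ∀ k ∈ D, 0 < δ k) (hDne : D.Nonempty) :
    StrictAntiOn (response D q δ) (Set.Ici 0) := by
  intro a ha b _ hab
  refine sum_lt_sum_of_nonempty hDne fun i hi => ?_
  have hi_pos : (0 : ℝ) < i := by exact_mod_cast hD i hi
  apply div_lt_div_of_pos_left (mul_pos (hq i hi) hi_pos) (add_mul_pos hδ ha hi)
  gcongr

lemma response_one_lt_one (hD : ∀ k ∈ D, 0 < k) (hq : ∀ k ∈ D, 0 < q k)
    (hqsum : ∑ k ∈ D, q k = 1) (hδ : ∀ k ∈ D, 0 < δ k) : response D q δ 1 < 1 := by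
  have hDne : D.Nonempty := nonempty_of_sum_ne_zero (f := q) (by simp [hqsum])
  calc response D q δ 1 < ∑ k ∈ D, q k := sum_lt_sum_of_nonempty hDne fun i hi => by
        have hi_pos : (0 : ℝ) < i := by exact_mod_cast hD i hi
        rw [div_lt_iff₀ (add_mul_pos hδ zero_le_one hi)]
        nlinarith [hq i hi, hδ i hi]
    _ = 1 := hqsum

lemma continuousOn_response (hδ : ∀ k ∈ D, 0 < δ k) :
    ContinuousOn (response D q δ) (Set.Ici 0) :=
  continuousOn_finsetSum D fun i hi =>
    continuousOn_const.div (by fun_prop) fun _ hΘ => (add_mul_pos hδ hΘ hi).ne'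

lemma exists_pos_response_eq_one (hD : ∀ k ∈ D, 0 < k) (hq : ∀ k ∈ D, 0 < q k)
    (hqsum : ∑ k ∈ D, q k = 1) (hδ : ∀ k ∈ D, 0 < δ k)
    (hR : 1 < ∑ k ∈ D, (k : ℝ) * q k / δ k) : ∃ Θ, 0 < Θ ∧ response D q δ Θ = 1 := by
  have h_one_mem : (1 : ℝ) ∈ Set.Icc (response D q δ 1) (response D q δ 0) :=
    ⟨(response_one_lt_one hD hq hqsum hδ).le, response_zero (D := D) ▸ hR.le⟩
  obtain ⟨Θ, hΘ, hfΘ⟩ := intermediate_value_Icc' zero_le_one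
    ((continuousOn_response hδ).mono Set.Icc_subset_Ici_self) h_one_mem
  refine ⟨Θ, hΘ.1.lt_of_ne ?_, hfΘ⟩
  rintro rfl
  rw [response_zero] at hfΘ
  linarith

lemma isStationary_endemicProfile (hδ : ∀ k ∈ D, 0 < δ k) {Θ : ℝ} (hΘ : 0 ≤ Θ)
    (h : response D q δ Θ = 1) : IsStationary D q δ (endemicProfile δ Θ) := by
  intro k hk
  rw [sum_mul_endemicProfile, h, mul_one]
  exact (mul_eq_one_sub_mul_iff_eq_div (add_mul_pos hδ hΘ hk).ne').2 rfl

lemma endemicProfile_mem_Icc (hδ : ∀ k ∈ D, 0 < δ k) {Θ : ℝ} (hΘ : 0 ≤ Θ) {k : ℕ}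
    (hk : k ∈ D) : endemicProfile δ Θ k ∈ Set.Icc 0 1 := by
  have hden := add_mul_pos hδ hΘ hk
  refine ⟨by unfold endemicProfile; positivity, ?_⟩
  rw [endemicProfile, div_le_one hden]
  linarith [hδ k hk]

lemma endemicProfile_pos (hD : ∀ k ∈ D, 0 < k) (hδ : ∀ k ∈ D, 0 < δ k) {Θ : ℝ} (hΘ : 0 < Θ)
    {k : ℕ} (hk : k ∈ D) : 0 < endemicProfile δ Θ k := by
  have hden := add_mul_pos hδ hΘ.le hk
  have hk_pos : (0 : ℝ) < k := by exact_mod_cast hD k hk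
  unfold endemicProfile
  positivity

namespace IsStationary

variable {x : ℕ → ℝ}

lemma eq_endemicProfile (hδ : ∀ k ∈ D, 0 < δ k) (hx : IsStationary D q δ x)
    (hΘ : 0 ≤ ∑ i ∈ D, q i * x i) :
    ∀ k ∈ D, x k = endemicProfile δ (∑ i ∈ D, q i * x i) k :=
  fun k hk => (mul_eq_one_sub_mul_iff_eq_div (add_mul_pos hδ hΘ hk).ne').1 (hx k hk)

lemma response_eq_one (hq : ∀ k ∈ D, 0 < q k) (hδ : ∀ k ∈ D, 0 < δ k) (hDne : D.Nonempty)
    (hx : IsStationary D q δ x) (hx_pos : ∀ k ∈ D, 0 < x k) :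
    0 < ∑ i ∈ D, q i * x i ∧ response D q δ (∑ i ∈ D, q i * x i) = 1 := by
  set Θ := ∑ i ∈ D, q i * x i
  have hΘ : 0 < Θ := sum_pos (fun i hi => mul_pos (hq i hi) (hx_pos i hi)) hDne
  have hx_eq := hx.eq_endemicProfile hδ hΘ.le
  have hΘ_fixed : Θ = Θ * response D q δ Θ := by
    rw [← sum_mul_endemicProfile]
    exact sum_congr rfl fun i hi => by rw [hx_eq i hi]
  exact ⟨hΘ, (mul_eq_left₀ hΘ.ne').1 hΘ_fixed.symm⟩

end IsStationary

end DBMF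

open DBMF

/-- For the degree-based mean-field SIS dynamics, an endemic
stationary state (a stationary state `x : D → [0,1]` with all coordinates strictly
positive) exists if and only if `R = Σ_k k q_k / δ_k > 1`; moreover when `R > 1`
the endemic state is unique: any two componentwise-positive stationary states coincide. -/
theorem endemic_state_iff_R_gt_one_and_unique
    (D : Finset ℕ) (hD : ∀ k ∈ D, 0 < k)
    (q : ℕ → ℝ) (hq : ∀ k ∈ D, 0 < q k) (hqsum : ∑ k ∈ D, q k = 1)
    (δ : ℕ → ℝ) (hδ : ∀ k ∈ D, 0 < δ k) :
    ((∃ x : ℕ → ℝ,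
        (∀ k ∈ D, x k ∈ Set.Icc (0 : ℝ) 1) ∧
        (∀ k ∈ D, δ k * x k = (1 - x k) * (k : ℝ) * ∑ i ∈ D, q i * x i) ∧
        (∀ k ∈ D, 0 < x k))
      ↔ 1 < ∑ k ∈ D, (k : ℝ) * q k / δ k)
    ∧ (1 < ∑ k ∈ D, (k : ℝ) * q k / δ k →
        ∀ x y : ℕ → ℝ,
          (∀ k ∈ D, x k ∈ Set.Icc (0 : ℝ) 1) →
          (∀ k ∈ D, δ k * x k = (1 - x k) * (k : ℝ) * ∑ i ∈ D, q i * x i) →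
          (∀ k ∈ D, 0 < x k) →
          (∀ k ∈ D, y k ∈ Set.Icc (0 : ℝ) 1) →
          (∀ k ∈ D, δ k * y k = (1 - y k) * (k : ℝ) * ∑ i ∈ D, q i * y i) →
          (∀ k ∈ D, 0 < y k) →
          ∀ k ∈ D, x k = y k) := by
  have hDne : D.Nonempty := nonempty_of_sum_ne_zero (f := q) (by simp [hqsum])
  have hf_anti := response_strictAntiOn hD hq hδ hDne
  refine ⟨⟨fun ⟨x, _, hx, hx_pos⟩ => ?_, fun hR => ?_⟩,
    fun _ x y _ hx hx_pos _ hy hy_pos k hk => ?_⟩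
  · obtain ⟨hΘ, hfΘ⟩ := IsStationary.response_eq_one hq hδ hDne hx hx_pos
    simpa [hfΘ, response_zero] using hf_anti Set.self_mem_Ici hΘ.le hΘ
  · obtain ⟨Θ, hΘ, hfΘ⟩ := exists_pos_response_eq_one hD hq hqsum hδ hR
    exact ⟨endemicProfile δ Θ, fun k hk => endemicProfile_mem_Icc hδ hΘ.le hk,
      isStationary_endemicProfile hδ hΘ.le hfΘ, fun k hk => endemicProfile_pos hD hδ hΘ hk⟩
  · obtain ⟨hΘx, hfx⟩ := IsStationary.response_eq_one hq hδ hDne hx hx_pos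
    obtain ⟨hΘy, hfy⟩ := IsStationary.response_eq_one hq hδ hDne hy hy_pos
    have hΘ_eq := hf_anti.injOn hΘx.le hΘy.le (hfx.trans hfy.symm)
    rw [IsStationary.eq_endemicProfile hδ hx hΘx.le k hk,
      IsStationary.eq_endemicProfile hδ hy hΘy.le k hk, hΘ_eq]
end

section
/- Let D be a finite set of positive integers, q : D → ℝ with q_k > 0 for all k ∈ D and Σ_{k∈D} q_k = 1. Fix k ∈ D and let δ_i > 0 for every i ∈ D with i ≠ k, and suppose Σ_{i∈D, i≠k} i q_i / δ_i < 1. Define δ̂_k := k q_k · (1 − Σ_{i∈D, i≠k} i q_i / δ_i)^{−1}. Then for any δ_k ≥ 0, there exists a unique v ∈ (0,1] satisfying Σ_{i∈D} i q_i/(δ_i + i v) = 1 if and only if δ_k < δ̂_k. -/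
/-- Fix a degree `k ∈ D` and positive curing rates `δ_i` for the other
degrees with `Σ_{i≠k} i q_i / δ_i < 1`, and let
`δ̂_k = k q_k (1 - Σ_{i≠k} i q_i / δ_i)⁻¹`. Then for any curing rate `δ_k ≥ 0` of the
degree-`k` nodes, the consistency equation `Σ_{i∈D} i q_i / (δ_i + i v) = 1` has a
unique solution `v ∈ (0,1]` if and only if `δ_k < δ̂_k`. -/
theorem endemic_v_exists_unique_iff_below_threshold
    (D : Finset ℕ) (hD : ∀ i ∈ D, 0 < i)
    (q : ℕ → ℝ) (hq : ∀ i ∈ D, 0 < q i) (hqsum : ∑ i ∈ D, q i = 1)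
    (k : ℕ) (hk : k ∈ D)
    (δ : ℕ → ℝ) (hδ : ∀ i ∈ D, i ≠ k → 0 < δ i)
    (hsum : ∑ i ∈ D.erase k, (i : ℝ) * q i / δ i < 1) :
    ∀ δk : ℝ, 0 ≤ δk →
      ((∃! v : ℝ, v ∈ Set.Ioc (0 : ℝ) 1 ∧
          ∑ i ∈ D, (i : ℝ) * q i / (Function.update δ k δk i + (i : ℝ) * v) = 1)
        ↔ δk < (k : ℝ) * q k * (1 - ∑ i ∈ D.erase k, (i : ℝ) * q i / δ i)⁻¹) := by
  intro δk hδk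
  set s := ∑ i ∈ D.erase k, (i : ℝ) * q i / δ i with hs_def
  have hqk := hq k hk
  have hkR : (0:ℝ) < k := Nat.cast_pos.mpr (hD k hk)
  have h1s : 0 < 1 - s := by linarith
  set δ' := Function.update δ k δk with hδ'def
  have hδ'k : δ' k = δk := Function.update_self _ _ _
  have hδ'i : ∀ i, i ≠ k → δ' i = δ i := fun i h => Function.update_of_ne h _ _
  have hδ'nonneg : ∀ i ∈ D, 0 ≤ δ' i := by
    intro i hi
    by_cases h : i = k
    · subst h; rw [hδ'k]; exact hδk
    · rw [hδ'i i h]; exact (hδ i hi h).le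
  set F := fun v : ℝ => ∑ i ∈ D, (i:ℝ) * q i / (δ' i + i * v) with hF
  have hden : ∀ v : ℝ, 0 < v → ∀ i ∈ D, 0 < δ' i + i * v := by
    intro v hv i hi
    have h1 : (0:ℝ) < i := Nat.cast_pos.mpr (hD i hi)
    have h2 := hδ'nonneg i hi
    nlinarith
  have hnum : ∀ i ∈ D, 0 < (i:ℝ) * q i := by
    intro i hi
    exact mul_pos (Nat.cast_pos.mpr (hD i hi)) (hq i hi)
  -- strict antitonicity on positives
  have hanti : ∀ v1 v2 : ℝ, 0 < v1 → v1 < v2 → F v2 < F v1 := by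
    intro v1 v2 hv1 hlt
    apply Finset.sum_lt_sum_of_nonempty ⟨k, hk⟩
    intro i hi
    have hiR : (0:ℝ) < i := Nat.cast_pos.mpr (hD i hi)
    have h1 : δ' i + i * v1 < δ' i + i * v2 := by nlinarith
    exact div_lt_div_of_pos_left (hnum i hi) (hden v1 hv1 i hi) h1
  have hF1 : F 1 ≤ 1 := by
    calc F 1 ≤ ∑ i ∈ D, q i := by
          apply Finset.sum_le_sum
          intro i hi
          have hd := hden 1 one_pos i hi
          rw [div_le_iff₀ hd]
          have h2 := hδ'nonneg i hi
          have h3 := (hq i hi).le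
          nlinarith
      _ = 1 := hqsum
  -- uniqueness helper
  have huniq : ∀ v, (v ∈ Set.Ioc (0:ℝ) 1 ∧ F v = 1) →
      ∀ w, (w ∈ Set.Ioc (0:ℝ) 1 ∧ F w = 1) → w = v := by
    intro v ⟨hvmem, hveq⟩ w ⟨hwmem, hweq⟩
    rcases lt_trichotomy w v with h | h | h
    · have := hanti w v hwmem.1 h; rw [hveq, hweq] at this; linarith
    · exact h
    · have := hanti v w hvmem.1 h; rw [hveq, hweq] at this; linarith
  -- continuity
  have hcont : ∀ a : ℝ, 0 ≤ a → (∀ i ∈ D, 0 < δ' i + i * a) →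
      ContinuousOn F (Set.Icc a 1) := by
    intro a ha hda
    apply continuousOn_finset_sum
    intro i hi
    apply ContinuousOn.div continuousOn_const
    · exact (continuous_const.add (continuous_const.mul continuous_id)).continuousOn
    · intro v hv
      have hiR : (0:ℝ) ≤ i := Nat.cast_nonneg i
      have h1 := hda i hi
      have h2 : (i:ℝ) * a ≤ i * v := by nlinarith [hv.1]
      nlinarith
  constructor
  · -- forward: contrapositive
    intro ⟨v, ⟨hvmem, hveq⟩, _⟩
    by_contra hge
    push_neg at hge
    have hThr : 0 < (k:ℝ) * q k * (1 - s)⁻¹ :=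
      mul_pos (mul_pos hkR hqk) (inv_pos.mpr h1s)
    have hδkpos : 0 < δk := lt_of_lt_of_le hThr hge
    have hkq : (k:ℝ) * q k ≤ δk * (1 - s) := by
      have h := mul_le_mul_of_nonneg_right hge h1s.le
      rw [mul_assoc, inv_mul_cancel₀ h1s.ne', mul_one] at h
      exact h
    -- F v < sum over D of i q i / δ' i
    have hδ'pos : ∀ i ∈ D, 0 < δ' i := by
      intro i hi
      by_cases h : i = k
      · subst h; rw [hδ'k]; exact hδkpos
      · rw [hδ'i i h]; exact hδ i hi h
    have hlt1 : F v < ∑ i ∈ D, (i:ℝ) * q i / δ' i := by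
      apply Finset.sum_lt_sum_of_nonempty ⟨k, hk⟩
      intro i hi
      have hiR : (0:ℝ) < i := Nat.cast_pos.mpr (hD i hi)
      have h1 : δ' i < δ' i + i * v := by nlinarith [hvmem.1]
      exact div_lt_div_of_pos_left (hnum i hi) (hδ'pos i hi) h1
    have hsplit : ∑ i ∈ D, (i:ℝ) * q i / δ' i = (k:ℝ) * q k / δk + s := by
      rw [← Finset.add_sum_erase D _ hk, hδ'k]
      congr 1
      apply Finset.sum_congr rfl
      intro i hi
      rw [hδ'i i (Finset.ne_of_mem_erase hi)]
    have hle : (k:ℝ) * q k / δk + s ≤ 1 := by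
      rw [div_add' _ _ _ hδkpos.ne', div_le_one hδkpos]
      nlinarith
    have hFv : F v = 1 := hveq
    rw [hsplit] at hlt1
    linarith
  · -- backward: existence
    intro hlt
    have hqk1 : q k ≤ 1 := by
      rw [← hqsum]
      exact Finset.single_le_sum (fun i hi => (hq i hi).le) hk
    -- find v0 ∈ (0,1] with F v0 > 1 (as F a > 1 with cont on [a,1]) — two cases
    have key : ∃ a : ℝ, 0 < a ∧ a ≤ 1 ∧ 1 < F a ∧ ContinuousOn F (Set.Icc a 1) := by
      by_cases hz : δk = 0
      · refine ⟨q k / 2, by linarith, by linarith, ?_, ?_⟩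
        · have hterm : (k:ℝ) * q k / (δ' k + k * (q k / 2)) = 2 := by
            rw [hδ'k, hz]
            rw [zero_add, div_eq_iff (by positivity)]
            ring
          have hle2 : (k:ℝ) * q k / (δ' k + k * (q k / 2)) ≤
              ∑ i ∈ D, (i:ℝ) * q i / (δ' i + i * (q k / 2)) :=
            Finset.single_le_sum
              (fun i hi => div_nonneg (hnum i hi).le (hden _ (by linarith) i hi).le) hk
          calc (1:ℝ) < 2 := one_lt_two
            _ = (k:ℝ) * q k / (δ' k + k * (q k / 2)) := hterm.symm
            _ ≤ F (q k / 2) := hle2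
        · apply hcont _ (by linarith)
          intro i hi
          exact hden _ (by linarith) i hi
      · have hδkpos : 0 < δk := lt_of_le_of_ne hδk (Ne.symm hz)
        have hδ'pos : ∀ i ∈ D, 0 < δ' i := by
          intro i hi
          by_cases h : i = k
          · subst h; rw [hδ'k]; exact hδkpos
          · rw [hδ'i i h]; exact hδ i hi h
        -- Use continuity at 0: F continuous on [0,1], F 0 > 1.
        have hF0 : F 0 = (k:ℝ) * q k / δk + s := by
          rw [hF]
          simp only [mul_zero, add_zero]
          rw [← Finset.add_sum_erase D _ hk, hδ'k]
          congr 1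
          apply Finset.sum_congr rfl
          intro i hi
          rw [hδ'i i (Finset.ne_of_mem_erase hi)]
        have hF0gt : 1 < F 0 := by
          rw [hF0]
          have h := mul_lt_mul_of_pos_right hlt h1s
          rw [mul_assoc, inv_mul_cancel₀ h1s.ne', mul_one] at h
          have h2 : 1 - s < (k:ℝ) * q k / δk := by
            rw [lt_div_iff₀ hδkpos]; nlinarith
          linarith
        have hcont0 : ContinuousOn F (Set.Icc 0 1) := by
          apply hcont 0 le_rfl
          intro i hi
          simpa using hδ'pos i hi
        -- continuity at 0 within Icc gives a point a > 0 with F a > 1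
        have := hcont0 0 ⟨le_rfl, zero_le_one⟩
        have h2 : ∀ᶠ x in nhdsWithin 0 (Set.Icc (0:ℝ) 1), 1 < F x :=
          this.eventually (eventually_gt_nhds hF0gt)
        have h3 : ∃ a ∈ Set.Ioc (0:ℝ) 1, 1 < F a := by
          have hne : (nhdsWithin (0:ℝ) (Set.Ioc 0 1)).NeBot :=
            left_nhdsWithin_Ioc_neBot zero_lt_one
          have h4 : ∀ᶠ x in nhdsWithin 0 (Set.Ioc (0:ℝ) 1), 1 < F x :=
            h2.filter_mono (nhdsWithin_mono _ Set.Ioc_subset_Icc_self)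
          have h5 : ∀ᶠ x in nhdsWithin 0 (Set.Ioc (0:ℝ) 1), x ∈ Set.Ioc (0:ℝ) 1 :=
            eventually_mem_nhdsWithin
          exact (h4.and h5).exists.imp (fun a ⟨h, hm⟩ => ⟨hm, h⟩)
        obtain ⟨a, hamem, haF⟩ := h3
        exact ⟨a, hamem.1, hamem.2, haF, hcont0.mono (Set.Icc_subset_Icc_left hamem.1.le)⟩
    obtain ⟨a, ha0, ha1, haF, hacont⟩ := key
    have hIVT := intermediate_value_Icc' ha1 hacont
    have h1mem : (1:ℝ) ∈ Set.Icc (F 1) (F a) := ⟨hF1, haF.le⟩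
    obtain ⟨v, hvmem, hveq⟩ := hIVT h1mem
    refine ⟨v, ⟨⟨lt_of_lt_of_le ha0 hvmem.1, hvmem.2⟩, hveq⟩, ?_⟩
    intro w hw
    exact huniq v ⟨⟨lt_of_lt_of_le ha0 hvmem.1, hvmem.2⟩, hveq⟩ w hw
end

section
/- Let D be a finite set of positive integers, q : D → ℝ with q_k > 0 for all k ∈ D and Σ_{k∈D} q_k = 1. Fix k ∈ D, let δ_i > 0 for every i ∈ D with i ≠ k, suppose Σ_{i∈D, i≠k} i q_i / δ_i < 1, and set δ̂_k := k q_k · (1 − Σ_{i∈D, i≠k} i q_i / δ_i)^{−1}. Let V : [0, δ̂_k) → ℝ be any function such that for every t ∈ [0, δ̂_k), V(t) ∈ (0,1] and Σ_{i∈D, i≠k} i q_i/(δ_i + i V(t)) + k q_k/(t + k V(t)) = 1. Then V is strictly decreasing and convex on [0, δ̂_k). -/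
lemma aux_inv_convex {x y a b : ℝ} (hx : 0 < x) (hy : 0 < y)
    (ha : 0 ≤ a) (hb : 0 ≤ b) (hab : a + b = 1) :
    (a * x + b * y)⁻¹ ≤ a * x⁻¹ + b * y⁻¹ := by
  have h0 : 0 < a * x + b * y := by
    rcases ha.lt_or_eq with ha' | ha'
    · have : 0 ≤ b * y := mul_nonneg hb hy.le
      nlinarith
    · have hb1 : b = 1 := by linarith
      simp [← ha', hb1, hy]
  rw [inv_eq_one_div, div_le_iff₀ h0]
  have hxi := mul_inv_cancel₀ hx.ne'
  have hyi := mul_inv_cancel₀ hy.ne'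
  have key : 2 ≤ x * y⁻¹ + y * x⁻¹ := by
    rw [← sub_nonneg]
    have : x * y⁻¹ + y * x⁻¹ - 2 = (x - y) ^ 2 * (x⁻¹ * y⁻¹) := by
      field_simp
      ring
    rw [this]
    positivity
  have expand : (a * x⁻¹ + b * y⁻¹) * (a * x + b * y)
      = a ^ 2 * (x * x⁻¹) + b ^ 2 * (y * y⁻¹) + a * b * (x * y⁻¹ + y * x⁻¹) := by
    ring
  rw [expand, hxi, hyi]
  nlinarith [mul_nonneg ha hb, key]

lemma aux_div_convex {c x y a b : ℝ} (hc : 0 ≤ c) (hx : 0 < x) (hy : 0 < y)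
    (ha : 0 ≤ a) (hb : 0 ≤ b) (hab : a + b = 1) :
    c / (a * x + b * y) ≤ a * (c / x) + b * (c / y) := by
  have h := aux_inv_convex hx hy ha hb hab
  have h2 := mul_le_mul_of_nonneg_left h hc
  calc c / (a * x + b * y) = c * (a * x + b * y)⁻¹ := by rw [div_eq_mul_inv]
    _ ≤ c * (a * x⁻¹ + b * y⁻¹) := h2
    _ = a * (c / x) + b * (c / y) := by rw [div_eq_mul_inv, div_eq_mul_inv]; ring

/-- With the other curing rates `δ_i > 0` (for `i ≠ k`) fixed and
satisfying `Σ_{i≠k} i q_i / δ_i < 1`, let `δ̂_k = k q_k (1 - Σ_{i≠k} i q_i / δ_i)⁻¹`,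
and let `V : [0, δ̂_k) → (0,1]` be the implicit function defined by the consistency
equation `Σ_{i≠k} i q_i / (δ_i + i V(t)) + k q_k / (t + k V(t)) = 1`. Then `V` is
strictly decreasing and convex on `[0, δ̂_k)`. -/
theorem endemic_v_strictAnti_convex_in_own_rate
    (D : Finset ℕ) (hD : ∀ i ∈ D, 0 < i)
    (q : ℕ → ℝ) (hq : ∀ i ∈ D, 0 < q i) (hqsum : ∑ i ∈ D, q i = 1)
    (k : ℕ) (hk : k ∈ D)
    (δ : ℕ → ℝ) (hδ : ∀ i ∈ D, i ≠ k → 0 < δ i)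
    (hsum : ∑ i ∈ D.erase k, (i : ℝ) * q i / δ i < 1)
    (δhat : ℝ)
    (hδhat : δhat = (k : ℝ) * q k * (1 - ∑ i ∈ D.erase k, (i : ℝ) * q i / δ i)⁻¹)
    (V : ℝ → ℝ)
    (hV : ∀ t ∈ Set.Ico (0 : ℝ) δhat,
      V t ∈ Set.Ioc (0 : ℝ) 1 ∧
      ∑ i ∈ D.erase k, (i : ℝ) * q i / (δ i + (i : ℝ) * V t)
        + (k : ℝ) * q k / (t + (k : ℝ) * V t) = 1) :
    StrictAntiOn V (Set.Ico 0 δhat) ∧ ConvexOn ℝ (Set.Ico 0 δhat) V := by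
  have hk0 : (0 : ℝ) < (k : ℝ) := by exact_mod_cast hD k hk
  have hqk : 0 < q k := hq k hk
  set F : ℝ → ℝ → ℝ := fun t v =>
    ∑ i ∈ D.erase k, (i : ℝ) * q i / (δ i + (i : ℝ) * v)
      + (k : ℝ) * q k / (t + (k : ℝ) * v) with hF
  -- facts about erased elements
  have hfacts : ∀ i ∈ D.erase k, 0 < (i : ℝ) ∧ 0 < δ i ∧ 0 < q i := by
    intro i hi
    obtain ⟨hik, hiD⟩ := Finset.mem_erase.mp hi
    exact ⟨by exact_mod_cast hD i hiD, hδ i hiD hik, hq i hiD⟩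
  -- strict antitonicity of F in v
  have hFv : ∀ t v v', 0 ≤ t → 0 < v → v < v' → F t v' < F t v := by
    intro t v v' ht hv hvv
    apply add_lt_add_of_le_of_lt
    · apply Finset.sum_le_sum
      intro i hi
      obtain ⟨hi0, hδi, hqi⟩ := hfacts i hi
      apply div_le_div_of_nonneg_left (by positivity) (by positivity)
      nlinarith
    · exact div_lt_div_of_pos_left (by positivity) (by positivity) (by nlinarith)
  -- strict antitonicity of F in t
  have hFt : ∀ t t' v, 0 ≤ t → t < t' → 0 < v → F t' v < F t v := by
    intro t t' v ht htt hv
    apply add_lt_add_of_le_of_lt le_rfl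
    exact div_lt_div_of_pos_left (by positivity) (by positivity) (by nlinarith)
  -- joint convexity of F
  have hFconv : ∀ t₁ t₂ v₁ v₂ a b, 0 ≤ t₁ → 0 ≤ t₂ → 0 < v₁ → 0 < v₂ →
      0 ≤ a → 0 ≤ b → a + b = 1 →
      F (a * t₁ + b * t₂) (a * v₁ + b * v₂) ≤ a * F t₁ v₁ + b * F t₂ v₂ := by
    intro t₁ t₂ v₁ v₂ a b ht₁ ht₂ hv₁ hv₂ ha hb hab
    have hrhs : a * F t₁ v₁ + b * F t₂ v₂ =
        ∑ i ∈ D.erase k, (a * ((i : ℝ) * q i / (δ i + (i : ℝ) * v₁))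
          + b * ((i : ℝ) * q i / (δ i + (i : ℝ) * v₂)))
        + (a * ((k : ℝ) * q k / (t₁ + (k : ℝ) * v₁))
          + b * ((k : ℝ) * q k / (t₂ + (k : ℝ) * v₂))) := by
      simp only [hF, mul_add, Finset.mul_sum, Finset.sum_add_distrib]
      ring
    rw [hrhs, hF]
    apply add_le_add
    · apply Finset.sum_le_sum
      intro i hi
      obtain ⟨hi0, hδi, hqi⟩ := hfacts i hi
      have hx : 0 < δ i + (i : ℝ) * v₁ := by positivity
      have hy : 0 < δ i + (i : ℝ) * v₂ := by positivity
      have key := aux_div_convex (c := (i : ℝ) * q i) (by positivity) hx hy ha hb hab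
      have heq : a * (δ i + (i : ℝ) * v₁) + b * (δ i + (i : ℝ) * v₂)
          = δ i + (i : ℝ) * (a * v₁ + b * v₂) := by nlinarith
      rw [heq] at key
      exact key
    · have hx : 0 < t₁ + (k : ℝ) * v₁ := by positivity
      have hy : 0 < t₂ + (k : ℝ) * v₂ := by positivity
      have key := aux_div_convex (c := (k : ℝ) * q k) (by positivity) hx hy ha hb hab
      have heq : a * (t₁ + (k : ℝ) * v₁) + b * (t₂ + (k : ℝ) * v₂)
          = (a * t₁ + b * t₂) + (k : ℝ) * (a * v₁ + b * v₂) := by ring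
      rw [heq] at key
      exact key
  constructor
  · -- strictly decreasing
    intro t₁ ht₁ t₂ ht₂ h12
    obtain ⟨hV₁, hE₁⟩ := hV t₁ ht₁
    obtain ⟨hV₂, hE₂⟩ := hV t₂ ht₂
    by_contra hcon
    push_neg at hcon
    have h1 : F t₂ (V t₂) ≤ F t₂ (V t₁) := by
      rcases hcon.lt_or_eq with h | h
      · exact (hFv t₂ (V t₁) (V t₂) ht₂.1 hV₁.1 h).le
      · rw [h]
    have h2 : F t₂ (V t₁) < F t₁ (V t₁) := hFt t₁ t₂ (V t₁) ht₁.1 h12 hV₁.1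
    have e1 : F t₁ (V t₁) = 1 := hE₁
    have e2 : F t₂ (V t₂) = 1 := hE₂
    linarith
  · -- convex
    refine ⟨convex_Ico 0 δhat, ?_⟩
    intro x hx y hy a b ha hb hab
    simp only [smul_eq_mul]
    set t := a * x + b * y with ht
    have htS : t ∈ Set.Ico (0 : ℝ) δhat := by
      have := (convex_Ico (0 : ℝ) δhat) hx hy ha hb hab
      simpa [smul_eq_mul] using this
    obtain ⟨hVx, hEx⟩ := hV x hx
    obtain ⟨hVy, hEy⟩ := hV y hy
    obtain ⟨hVt, hEt⟩ := hV t htS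
    set w := a * V x + b * V y with hw
    have hw0 : 0 < w := by
      rcases ha.lt_or_eq with ha' | ha'
      · have : 0 ≤ b * V y := mul_nonneg hb hVy.1.le
        nlinarith [hVx.1]
      · have hb1 : b = 1 := by linarith
        simp [hw, ← ha', hb1, hVy.1]
    have hle : F t w ≤ 1 := by
      calc F t w ≤ a * F x (V x) + b * F y (V y) :=
            hFconv x y (V x) (V y) a b hx.1 hy.1 hVx.1 hVy.1 ha hb hab
        _ = a * 1 + b * 1 := by
            rw [show F x (V x) = 1 from hEx, show F y (V y) = 1 from hEy]
        _ = 1 := by linarith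
    by_contra hcon
    push_neg at hcon
    have : F t (V t) < F t w := hFv t w (V t) htS.1 hw0 hcon
    have e : F t (V t) = 1 := hEt
    linarith
end

section
/- Let D be a finite set of positive integers, q : D → ℝ with q_k > 0 for all k ∈ D and Σ_{k∈D} q_k = 1. Fix k ∈ D, let δ_i > 0 for every i ∈ D with i ≠ k, suppose Σ_{i∈D, i≠k} i q_i / δ_i < 1, and set δ̂_k := k q_k · (1 − Σ_{i∈D, i≠k} i q_i / δ_i)^{−1}. Let V : [0, δ̂_k) → ℝ be any function such that for every t ∈ [0, δ̂_k), V(t) ∈ (0,1] and Σ_{i∈D, i≠k} i q_i/(δ_i + i V(t)) + k q_k/(t + k V(t)) = 1. Then the infection probability t ↦ x_k(t) := k V(t)/(t + k V(t)) is strictly decreasing and convex on [0, δ̂_k). -/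
/-!
Write `S(v) = ∑_{i ≠ k} i q_i / (δ_i + i v)`. For `v = V(t)` the consistency equation reads
`k q_k / (t + k v) = 1 - S(v)`, so the rate and the infection probability are explicit functions
of the state `v`: `t = F(v) = k q_k / (1 - S(v)) - k v` and `x_k(t) = G(v) = v (1 - S(v)) / q_k`.
`F` is strictly decreasing and `G` strictly increasing, hence `V` and `x_k = G ∘ V` are strictly
decreasing. By Cauchy's mean value theorem every chord slope of `x_k` is a value `G'(c) / F'(c)`
at a state `c` between the states of the chord's endpoints, and `G' / F'` decreases in `v`,
because `(v (1 - S))' = 1 - ∑_{i ≠ k} i q_i δ_i / (δ_i + i v)²` increases while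
`-S' / (1 - S)²` decreases. As `V` decreases, the chord slopes of `x_k` increase.
-/

open Set

theorem antitoneOn_div_pow_add_mul {c a b : ℝ} (hc : 0 ≤ c) (ha : 0 < a) (hb : 0 ≤ b)
    (m : ℕ) :
    AntitoneOn (fun v => c / (a + b * v) ^ m) (Ici 0) := by
  intro u hu _ _ huv
  have hpos : 0 < a + b * u := by nlinarith [mem_Ici.1 hu]
  dsimp only
  gcongr

section ParametrizedGraph

variable {s J : Set ℝ} {V F G F' G' : ℝ → ℝ}

theorem StrictAntiOn.strictAntiOn_of_rightInvOn (hF : StrictAntiOn F J) (hVJ : MapsTo V s J)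
    (hFV : RightInvOn V F s) : StrictAntiOn V s := by
  intro t₁ h₁ t₂ h₂ hlt
  by_contra! hle
  have := hF.antitoneOn (hVJ h₁) (hVJ h₂) hle
  rw [hFV h₁, hFV h₂] at this
  exact hlt.not_ge this

theorem exists_slope_comp_eq_div_deriv (hJ : J.OrdConnected) (hVJ : MapsTo V s J)
    (hV : StrictAntiOn V s) (hFV : RightInvOn V F s)
    (hF : ∀ v ∈ J, HasDerivAt F (F' v) v) (hG : ∀ v ∈ J, HasDerivAt G (G' v) v)
    (hF' : ∀ v ∈ J, F' v ≠ 0) {t₁ t₂ : ℝ} (h₁ : t₁ ∈ s) (h₂ : t₂ ∈ s) (hlt : t₁ < t₂) :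
    ∃ c ∈ Ioo (V t₂) (V t₁), (G (V t₂) - G (V t₁)) / (t₂ - t₁) = G' c / F' c := by
  have hIcc : Icc (V t₂) (V t₁) ⊆ J := hJ.out (hVJ h₂) (hVJ h₁)
  have hIoo : Ioo (V t₂) (V t₁) ⊆ J := Ioo_subset_Icc_self.trans hIcc
  obtain ⟨c, hc, hcauchy⟩ :=
    exists_ratio_hasDerivAt_eq_ratio_slope F F' (hV h₁ h₂ hlt)
    (HasDerivAt.continuousOn fun v hv => hF v (hIcc hv)) (fun v hv => hF v (hIoo hv))
    G G' (HasDerivAt.continuousOn fun v hv => hG v (hIcc hv)) (fun v hv => hG v (hIoo hv))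
  rw [hFV h₁, hFV h₂] at hcauchy
  have hF'c := hF' c (hIoo hc)
  have hdt : t₂ - t₁ ≠ 0 := sub_ne_zero.2 hlt.ne'
  refine ⟨c, hc, ?_⟩
  field_simp
  linear_combination -hcauchy

theorem convexOn_comp_of_antitoneOn_div_deriv (hs : Convex ℝ s) (hJ : J.OrdConnected)
    (hVJ : MapsTo V s J) (hV : StrictAntiOn V s) (hFV : RightInvOn V F s)
    (hF : ∀ v ∈ J, HasDerivAt F (F' v) v) (hG : ∀ v ∈ J, HasDerivAt G (G' v) v)
    (hF' : ∀ v ∈ J, F' v ≠ 0) (hGF' : AntitoneOn (fun v => G' v / F' v) J) :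
    ConvexOn ℝ s (fun t => G (V t)) := by
  refine convexOn_of_slope_mono_adjacent hs fun {x y z} hx hz hxy hyz => ?_
  have hy : y ∈ s := hs.ordConnected.out hx hz ⟨hxy.le, hyz.le⟩
  obtain ⟨c₁, hc₁, hslope₁⟩ :=
    exists_slope_comp_eq_div_deriv hJ hVJ hV hFV hF hG hF' hx hy hxy
  obtain ⟨c₂, hc₂, hslope₂⟩ :=
    exists_slope_comp_eq_div_deriv hJ hVJ hV hFV hF hG hF' hy hz hyz
  rw [hslope₁, hslope₂]
  exact hGF' (hJ.out (hVJ hz) (hVJ hy) (Ioo_subset_Icc_self hc₂))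
    (hJ.out (hVJ hy) (hVJ hx) (Ioo_subset_Icc_self hc₁)) (hc₂.2.trans hc₁.1).le

end ParametrizedGraph

section ConsistencyEquation

variable {ι : Type*} (s : Finset ι) (n w δ : ι → ℝ)

noncomputable def consistencySum (v : ℝ) : ℝ := ∑ i ∈ s, w i / (δ i + n i * v)

noncomputable def consistencySumDeriv (v : ℝ) : ℝ :=
  -∑ i ∈ s, n i * w i / (δ i + n i * v) ^ 2

variable (κ θ : ℝ)

-- In the theorem, `n i = i`, `w i = i q_i`, `κ = k` and `θ = q_k`.
noncomputable def rateOfState (v : ℝ) : ℝ :=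
  κ * θ / (1 - consistencySum s n w δ v) - κ * v

noncomputable def rateOfStateDeriv (v : ℝ) : ℝ :=
  κ * θ * consistencySumDeriv s n w δ v / (1 - consistencySum s n w δ v) ^ 2 - κ

noncomputable def infectionOfState (v : ℝ) : ℝ := v * (1 - consistencySum s n w δ v) / θ

noncomputable def infectionOfStateDeriv (v : ℝ) : ℝ :=
  (1 - consistencySum s n w δ v - v * consistencySumDeriv s n w δ v) / θ

def admissibleStates : Set ℝ := {v | 0 < v ∧ consistencySum s n w δ v < 1}

local notation "S" => consistencySum s n w δ
local notation "S'" => consistencySumDeriv s n w δ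
local notation "F" => rateOfState s n w δ κ θ
local notation "F'" => rateOfStateDeriv s n w δ κ θ
local notation "G" => infectionOfState s n w δ θ
local notation "G'" => infectionOfStateDeriv s n w δ θ
local notation "Ω" => admissibleStates s n w δ

variable {s n w δ κ θ}

theorem antitoneOn_consistencySum (hn : ∀ i ∈ s, 0 ≤ n i) (hw : ∀ i ∈ s, 0 ≤ w i)
    (hδ : ∀ i ∈ s, 0 < δ i) : AntitoneOn S (Ici 0) := fun u hu v hv huv =>
  Finset.sum_le_sum fun i hi => by
    simpa using antitoneOn_div_pow_add_mul (hw i hi) (hδ i hi) (hn i hi) 1 hu hv huv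

theorem monotoneOn_consistencySumDeriv (hn : ∀ i ∈ s, 0 ≤ n i) (hw : ∀ i ∈ s, 0 ≤ w i)
    (hδ : ∀ i ∈ s, 0 < δ i) : MonotoneOn S' (Ici 0) := fun _ hu _ hv huv =>
  neg_le_neg <| Finset.sum_le_sum fun i hi => antitoneOn_div_pow_add_mul
    (mul_nonneg (hn i hi) (hw i hi)) (hδ i hi) (hn i hi) 2 hu hv huv

theorem consistencySumDeriv_nonpos (hn : ∀ i ∈ s, 0 ≤ n i) (hw : ∀ i ∈ s, 0 ≤ w i)
    (v : ℝ) : S' v ≤ 0 :=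
  neg_nonpos.2 <| Finset.sum_nonneg fun i hi => by
    have := hn i hi
    have := hw i hi
    positivity

theorem hasDerivAt_consistencySum (hn : ∀ i ∈ s, 0 ≤ n i) (hδ : ∀ i ∈ s, 0 < δ i) {v : ℝ}
    (hv : 0 ≤ v) : HasDerivAt S (S' v) v := by
  rw [consistencySumDeriv, ← Finset.sum_neg_distrib]
  refine HasDerivAt.fun_sum fun i hi => ?_
  have hden : δ i + n i * v ≠ 0 :=
    (add_pos_of_pos_of_nonneg (hδ i hi) (mul_nonneg (hn i hi) hv)).ne'
  have hlin : HasDerivAt (fun u => δ i + n i * u) (n i) v := by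
    simpa using ((hasDerivAt_id v).const_mul (n i)).const_add (δ i)
  exact ((hasDerivAt_const v (w i)).fun_div hlin hden).congr_deriv (by ring)

theorem one_sub_consistencySum_sub_mul_deriv (hn : ∀ i ∈ s, 0 ≤ n i)
    (hδ : ∀ i ∈ s, 0 < δ i) {v : ℝ} (hv : 0 ≤ v) :
    1 - S v - v * S' v = 1 - ∑ i ∈ s, w i * δ i / (δ i + n i * v) ^ 2 := by
  rw [consistencySum, consistencySumDeriv, mul_neg, Finset.mul_sum, sub_neg_eq_add, sub_add,
    ← Finset.sum_sub_distrib]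
  congr 1
  refine Finset.sum_congr rfl fun i hi => ?_
  have hden : δ i + n i * v ≠ 0 :=
    (add_pos_of_pos_of_nonneg (hδ i hi) (mul_nonneg (hn i hi) hv)).ne'
  field_simp
  ring

theorem monotoneOn_one_sub_consistencySum_sub_mul_deriv (hn : ∀ i ∈ s, 0 ≤ n i)
    (hw : ∀ i ∈ s, 0 ≤ w i) (hδ : ∀ i ∈ s, 0 < δ i) :
    MonotoneOn (fun v => 1 - S v - v * S' v) (Ici 0) := by
  intro u hu v hv huv
  simp only [one_sub_consistencySum_sub_mul_deriv hn hδ hu,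
    one_sub_consistencySum_sub_mul_deriv hn hδ hv]
  exact sub_le_sub_left (Finset.sum_le_sum fun i hi => antitoneOn_div_pow_add_mul
    (mul_nonneg (hw i hi) (hδ i hi).le) (hδ i hi) (hn i hi) 2 hu hv huv) 1

theorem ordConnected_admissibleStates (hn : ∀ i ∈ s, 0 ≤ n i) (hw : ∀ i ∈ s, 0 ≤ w i)
    (hδ : ∀ i ∈ s, 0 < δ i) : Set.OrdConnected Ω :=
  ⟨fun _ hu _ _ _ hv => ⟨hu.1.trans_le hv.1,
    (antitoneOn_consistencySum hn hw hδ hu.1.le (hu.1.le.trans hv.1) hv.1).trans_lt hu.2⟩⟩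

theorem mem_admissibleStates_of_consistency (hκ : 0 < κ) (hθ : 0 < θ) {t v : ℝ}
    (ht : 0 ≤ t) (hv : 0 < v) (h : S v + κ * θ / (t + κ * v) = 1) : v ∈ Ω := by
  have : 0 < κ * θ / (t + κ * v) := by positivity
  exact ⟨hv, by linarith⟩

theorem rateOfState_eq_of_consistency (hκ : 0 < κ) (hθ : 0 < θ) {t v : ℝ} (ht : 0 ≤ t)
    (hv : 0 < v) (h : S v + κ * θ / (t + κ * v) = 1) : F v = t := by
  have hslack : 1 - S v = κ * θ / (t + κ * v) := by linarith
  have : t + κ * v ≠ 0 := by positivity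
  rw [rateOfState, hslack]
  field_simp
  ring

theorem infectionOfState_eq_of_consistency (hθ : 0 < θ) {t v : ℝ}
    (h : S v + κ * θ / (t + κ * v) = 1) : G v = κ * v / (t + κ * v) := by
  have hslack : 1 - S v = κ * θ / (t + κ * v) := by linarith
  rw [infectionOfState, hslack]
  field_simp

theorem strictAntiOn_rateOfState (hn : ∀ i ∈ s, 0 ≤ n i) (hw : ∀ i ∈ s, 0 ≤ w i)
    (hδ : ∀ i ∈ s, 0 < δ i) (hκ : 0 < κ) (hθ : 0 ≤ θ) : StrictAntiOn F Ω := by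
  intro u hu v hv huv
  have hslack : 1 - S u ≤ 1 - S v :=
    sub_le_sub_left (antitoneOn_consistencySum hn hw hδ hu.1.le hv.1.le huv.le) 1
  have : κ * θ / (1 - S v) ≤ κ * θ / (1 - S u) :=
    div_le_div_of_nonneg_left (by positivity) (sub_pos.2 hu.2) hslack
  have : κ * u < κ * v := mul_lt_mul_of_pos_left huv hκ
  simp only [rateOfState]
  linarith

theorem strictMonoOn_infectionOfState (hn : ∀ i ∈ s, 0 ≤ n i) (hw : ∀ i ∈ s, 0 ≤ w i)
    (hδ : ∀ i ∈ s, 0 < δ i) (hθ : 0 < θ) : StrictMonoOn G Ω := by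
  intro u hu v hv huv
  have hslack : 1 - S u ≤ 1 - S v :=
    sub_le_sub_left (antitoneOn_consistencySum hn hw hδ hu.1.le hv.1.le huv.le) 1
  exact div_lt_div_of_pos_right (mul_lt_mul huv hslack (sub_pos.2 hu.2) hv.1.le) hθ

theorem hasDerivAt_rateOfState (hn : ∀ i ∈ s, 0 ≤ n i) (hδ : ∀ i ∈ s, 0 < δ i)
    {v : ℝ} (hv : v ∈ Ω) : HasDerivAt F (F' v) v := by
  have hslack := (hasDerivAt_consistencySum (w := w) hn hδ hv.1.le).const_sub 1
  have := ((hasDerivAt_const v (κ * θ)).fun_div hslack (sub_pos.2 hv.2).ne').fun_sub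
    ((hasDerivAt_id v).const_mul κ)
  exact this.congr_deriv (by simp [rateOfStateDeriv])

theorem hasDerivAt_infectionOfState (hn : ∀ i ∈ s, 0 ≤ n i) (hδ : ∀ i ∈ s, 0 < δ i)
    {v : ℝ} (hv : v ∈ Ω) : HasDerivAt G (G' v) v := by
  have hslack := (hasDerivAt_consistencySum (w := w) hn hδ hv.1.le).const_sub 1
  exact (((hasDerivAt_id v).fun_mul hslack).div_const θ).congr_deriv
    (by simp [infectionOfStateDeriv]; ring)

theorem rateOfStateDeriv_neg (hn : ∀ i ∈ s, 0 ≤ n i) (hw : ∀ i ∈ s, 0 ≤ w i)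
    (hκ : 0 < κ) (hθ : 0 ≤ θ) (v : ℝ) : F' v < 0 := by
  have : κ * θ * S' v / (1 - S v) ^ 2 ≤ 0 :=
    div_nonpos_of_nonpos_of_nonneg
      (mul_nonpos_of_nonneg_of_nonpos (by positivity) (consistencySumDeriv_nonpos hn hw v))
      (sq_nonneg _)
  simp only [rateOfStateDeriv]
  linarith

theorem antitoneOn_infectionOfStateDeriv_div_rateOfStateDeriv (hn : ∀ i ∈ s, 0 ≤ n i)
    (hw : ∀ i ∈ s, 0 ≤ w i) (hδ : ∀ i ∈ s, 0 < δ i) (hκ : 0 < κ) (hθ : 0 < θ) :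
    AntitoneOn (fun v => G' v / F' v) Ω := by
  intro u hu v hv huv
  have hslack_pos : 0 < 1 - S u := sub_pos.2 hu.2
  have hslack : 1 - S u ≤ 1 - S v :=
    sub_le_sub_left (antitoneOn_consistencySum hn hw hδ hu.1.le hv.1.le huv) 1
  have hS'u := consistencySumDeriv_nonpos (δ := δ) hn hw u
  have hS'v := consistencySumDeriv_nonpos (δ := δ) hn hw v
  have hnum : G' u ≤ G' v := div_le_div_of_nonneg_right
    (monotoneOn_one_sub_consistencySum_sub_mul_deriv hn hw hδ hu.1.le hv.1.le huv) hθ.le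
  have hnum_pos : 0 < G' u := div_pos (by nlinarith [hu.1]) hθ
  have hcurv : -S' v / (1 - S v) ^ 2 ≤ -S' u / (1 - S u) ^ 2 :=
    div_le_div₀ (neg_nonneg.2 hS'u)
      (neg_le_neg (monotoneOn_consistencySumDeriv hn hw hδ hu.1.le hv.1.le huv))
      (by positivity) (pow_le_pow_left₀ hslack_pos.le hslack 2)
  have hF' (x : ℝ) : F' x = -(κ + κ * θ * (-S' x / (1 - S x) ^ 2)) := by
    rw [rateOfStateDeriv]
    ring
  have hden :
      κ + κ * θ * (-S' v / (1 - S v) ^ 2) ≤ κ + κ * θ * (-S' u / (1 - S u) ^ 2) := by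
    gcongr
  simp only [hF', div_neg, neg_le_neg_iff]
  exact div_le_div₀ (hnum_pos.le.trans hnum) hnum (add_pos_of_pos_of_nonneg hκ
    (mul_nonneg (by positivity) (div_nonneg (neg_nonneg.2 hS'v) (sq_nonneg _)))) hden

end ConsistencyEquation

theorem infection_probability_strictAnti_convex_in_own_rate_general
    (D : Finset ℕ) (hD : ∀ i ∈ D, 0 < i)
    (q : ℕ → ℝ) (hq : ∀ i ∈ D, 0 < q i)
    (k : ℕ) (hk : k ∈ D)
    (δ : ℕ → ℝ) (hδ : ∀ i ∈ D, i ≠ k → 0 < δ i)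
    (δhat : ℝ)
    (V : ℝ → ℝ)
    (hV : ∀ t ∈ Set.Ico (0 : ℝ) δhat,
      V t ∈ Set.Ioc (0 : ℝ) 1 ∧
      ∑ i ∈ D.erase k, (i : ℝ) * q i / (δ i + (i : ℝ) * V t)
        + (k : ℝ) * q k / (t + (k : ℝ) * V t) = 1) :
    StrictAntiOn (fun t => (k : ℝ) * V t / (t + (k : ℝ) * V t)) (Set.Ico 0 δhat) ∧
      ConvexOn ℝ (Set.Ico 0 δhat) (fun t => (k : ℝ) * V t / (t + (k : ℝ) * V t)) := by
  set n : ℕ → ℝ := fun i => i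
  set w : ℕ → ℝ := fun i => i * q i
  have hn : ∀ i ∈ D.erase k, 0 ≤ n i := fun i _ => i.cast_nonneg
  have hw : ∀ i ∈ D.erase k, 0 ≤ w i := fun i hi =>
    mul_nonneg i.cast_nonneg (hq i (Finset.mem_of_mem_erase hi)).le
  have hδ' : ∀ i ∈ D.erase k, 0 < δ i := fun i hi =>
    hδ i (Finset.mem_of_mem_erase hi) (Finset.ne_of_mem_erase hi)
  have hκ : (0 : ℝ) < k := by exact_mod_cast hD k hk
  have hθ : 0 < q k := hq k hk
  have hmaps : MapsTo V (Ico 0 δhat) (admissibleStates (D.erase k) n w δ) := fun t ht =>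
    mem_admissibleStates_of_consistency hκ hθ ht.1 (hV t ht).1.1 (hV t ht).2
  have hinv : RightInvOn V (rateOfState (D.erase k) n w δ k (q k)) (Ico 0 δhat) := fun t ht =>
    rateOfState_eq_of_consistency hκ hθ ht.1 (hV t ht).1.1 (hV t ht).2
  have hx : EqOn (fun t => infectionOfState (D.erase k) n w δ (q k) (V t))
      (fun t => (k : ℝ) * V t / (t + (k : ℝ) * V t)) (Ico 0 δhat) := fun t ht =>
    infectionOfState_eq_of_consistency hθ (hV t ht).2
  have hV_anti : StrictAntiOn V (Ico 0 δhat) :=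
    (strictAntiOn_rateOfState hn hw hδ' hκ hθ.le).strictAntiOn_of_rightInvOn hmaps hinv
  refine ⟨((strictMonoOn_infectionOfState hn hw hδ' hθ).comp_strictAntiOn hV_anti hmaps).congr hx,
    ?_⟩
  exact (convexOn_comp_of_antitoneOn_div_deriv (convex_Ico 0 δhat)
    (ordConnected_admissibleStates hn hw hδ') hmaps hV_anti hinv
    (fun _ hv => hasDerivAt_rateOfState hn hδ' hv)
    (fun _ hv => hasDerivAt_infectionOfState hn hδ' hv)
    (fun v _ => (rateOfStateDeriv_neg hn hw hκ hθ.le v).ne)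
    (antitoneOn_infectionOfStateDeriv_div_rateOfStateDeriv hn hw hδ' hκ hθ)).congr hx

/-- In the setting of the implicit function `V` of Statement 5
(the endemic-state neighbor infection probability as a function of the curing rate
`t = δ_k` of degree-`k` nodes), the steady-state infection probability of degree-`k`
nodes, `x_k(t) = k V(t) / (t + k V(t))`, is strictly decreasing and convex
on `[0, δ̂_k)`. -/
theorem infection_probability_strictAnti_convex_in_own_rate
    (D : Finset ℕ) (hD : ∀ i ∈ D, 0 < i)
    (q : ℕ → ℝ) (hq : ∀ i ∈ D, 0 < q i) (hqsum : ∑ i ∈ D, q i = 1)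
    (k : ℕ) (hk : k ∈ D)
    (δ : ℕ → ℝ) (hδ : ∀ i ∈ D, i ≠ k → 0 < δ i)
    (hsum : ∑ i ∈ D.erase k, (i : ℝ) * q i / δ i < 1)
    (δhat : ℝ)
    (hδhat : δhat = (k : ℝ) * q k * (1 - ∑ i ∈ D.erase k, (i : ℝ) * q i / δ i)⁻¹)
    (V : ℝ → ℝ)
    (hV : ∀ t ∈ Set.Ico (0 : ℝ) δhat,
      V t ∈ Set.Ioc (0 : ℝ) 1 ∧
      ∑ i ∈ D.erase k, (i : ℝ) * q i / (δ i + (i : ℝ) * V t)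
        + (k : ℝ) * q k / (t + (k : ℝ) * V t) = 1) :
    StrictAntiOn (fun t => (k : ℝ) * V t / (t + (k : ℝ) * V t)) (Set.Ico 0 δhat) ∧
      ConvexOn ℝ (Set.Ico 0 δhat) (fun t => (k : ℝ) * V t / (t + (k : ℝ) * V t)) :=
  infection_probability_strictAnti_convex_in_own_rate_general D hD q hq k hk δ hδ δhat V hV
end

section
/- Let D be a finite set of positive integers, q : D → ℝ with q_k > 0 for all k ∈ D and Σ_{k∈D} q_k = 1, and suppose c_k ≥ 1/k for every k ∈ D. Let δ* be a degree-based equilibrium with v(δ*) > 0 that satisfies the tie-breaking rule: for every k ∈ D, if δ*_k > 0 then J_k(δ*) < 1 (i.e. nodes choose curing rate 0 whenever their optimal cost equals 1). Then δ*_k = 0 for every k ∈ D. -/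
open Classical in
/-- The endemic-state neighbor infection probability `v(δ)`: a solution `v ∈ (0,1]` of
the consistency equation `Σ_{i∈D} i q_i / (δ_i + i v) = 1` if one exists (it is then
unique for nonnegative curing rates), and `0` otherwise. -/
noncomputable def vstar (D : Finset ℕ) (q : ℕ → ℝ) (δ : ℕ → ℝ) : ℝ :=
  if h : ∃ v : ℝ, v ∈ Set.Ioc (0 : ℝ) 1 ∧
      ∑ i ∈ D, (i : ℝ) * q i / (δ i + (i : ℝ) * v) = 1 then h.choose else 0

/-- The steady-state infection probability of degree-`k` nodes:
`x_k(δ) = k v(δ) / (δ_k + k v(δ))` if `v(δ) > 0`, and `0` otherwise. -/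
noncomputable def xinf (D : Finset ℕ) (q : ℕ → ℝ) (δ : ℕ → ℝ) (k : ℕ) : ℝ :=
  if 0 < vstar D q δ then (k : ℝ) * vstar D q δ / (δ k + (k : ℝ) * vstar D q δ) else 0

/-- The expected cost of degree-`k` nodes: `J_k(δ) = x_k(δ) + c_k δ_k`. -/
noncomputable def cost (D : Finset ℕ) (q : ℕ → ℝ) (c : ℕ → ℝ) (δ : ℕ → ℝ) (k : ℕ) : ℝ :=
  xinf D q δ k + c k * δ k

/-- If the per-unit curing costs satisfy `c_k ≥ 1/k` for every degree
`k ∈ D`, then at any degree-based equilibrium `δ*` with `v(δ*) > 0` obeying the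
tie-breaking rule (a positive curing rate is chosen only if the optimal cost is
strictly below 1), every degree chooses curing rate `0`. -/
theorem dbe_zero_when_costs_high
    (D : Finset ℕ) (hD : ∀ k ∈ D, 0 < k)
    (q : ℕ → ℝ) (hq : ∀ k ∈ D, 0 < q k) (hqsum : ∑ k ∈ D, q k = 1)
    (c : ℕ → ℝ) (hc : ∀ k ∈ D, 0 < c k) (hchigh : ∀ k ∈ D, 1 / (k : ℝ) ≤ c k)
    (δstar : ℕ → ℝ)
    (hfeas : ∀ k ∈ D, δstar k ∈ Set.Icc (0 : ℝ) (1 / c k))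
    (hdbe : ∀ k ∈ D, ∀ s ∈ Set.Icc (0 : ℝ) (1 / c k),
      cost D q c δstar k ≤ cost D q c (Function.update δstar k s) k)
    (hv : 0 < vstar D q δstar)
    (htie : ∀ k ∈ D, 0 < δstar k → cost D q c δstar k < 1) :
    ∀ k ∈ D, δstar k = 0 := by
  intro k hk
  by_contra hne
  have hδk : 0 < δstar k := lt_of_le_of_ne (hfeas k hk).1 (Ne.symm hne)
  have key : vstar D q δstar ∈ Set.Ioc (0:ℝ) 1 ∧
      ∑ i ∈ D, (i : ℝ) * q i / (δstar i + (i : ℝ) * vstar D q δstar) = 1 := by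
    by_cases h : ∃ v : ℝ, v ∈ Set.Ioc (0 : ℝ) 1 ∧
        ∑ i ∈ D, (i : ℝ) * q i / (δstar i + (i : ℝ) * v) = 1
    · have hv' : vstar D q δstar = h.choose := by rw [vstar, dif_pos h]
      rw [hv']; exact h.choose_spec
    · exfalso
      rw [vstar, dif_neg h] at hv
      exact lt_irrefl 0 hv
  obtain ⟨⟨hv0, hv1⟩, hsum⟩ := key
  set v := vstar D q δstar with hvdef
  have hden : ∀ i ∈ D, 0 < δstar i + (i:ℝ) * v := by
    intro i hi
    have : (0:ℝ) < (i:ℝ) := by exact_mod_cast hD i hi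
    exact add_pos_of_nonneg_of_pos (hfeas i hi).1 (mul_pos this hv0)
  have hbound : ∀ i ∈ D, 0 < δstar i → δstar i + (i:ℝ) * v < (i:ℝ) := by
    intro i hi hδi
    have hcost := htie i hi hδi
    have hipos : (0:ℝ) < (i:ℝ) := by exact_mod_cast hD i hi
    have hxk : xinf D q δstar i = (i:ℝ) * v / (δstar i + (i:ℝ)*v) := by
      rw [xinf, if_pos hv0]
    have hA := hden i hi
    have hlow : δstar i / (i:ℝ) ≤ c i * δstar i := by
      have h1 : (1 / (i:ℝ)) * δstar i ≤ c i * δstar i :=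
        mul_le_mul_of_nonneg_right (hchigh i hi) hδi.le
      calc δstar i / (i:ℝ) = (1 / (i:ℝ)) * δstar i := by ring
        _ ≤ c i * δstar i := h1
    have h1 : (i:ℝ) * v / (δstar i + (i:ℝ)*v) + δstar i / (i:ℝ) < 1 := by
      have := hcost
      rw [cost, hxk] at this
      linarith
    rw [div_add_div _ _ (ne_of_gt hA) (ne_of_gt hipos),
        div_lt_one (mul_pos hA hipos)] at h1
    nlinarith [h1, hδi, hA]
  have hle : ∀ i ∈ D, δstar i + (i:ℝ) * v ≤ (i:ℝ) := by
    intro i hi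
    rcases lt_or_eq_of_le (hfeas i hi).1 with h | h
    · exact (hbound i hi h).le
    · have hipos : (0:ℝ) < (i:ℝ) := by exact_mod_cast hD i hi
      rw [← h]
      nlinarith
  have hterm : ∀ i ∈ D, q i ≤ (i : ℝ) * q i / (δstar i + (i : ℝ) * v) := by
    intro i hi
    rw [le_div_iff₀ (hden i hi)]
    nlinarith [hq i hi, hle i hi]
  have htermk : q k < (k : ℝ) * q k / (δstar k + (k : ℝ) * v) := by
    rw [lt_div_iff₀ (hden k hk)]
    nlinarith [hq k hk, hbound k hk hδk]
  have hlt : ∑ i ∈ D, q i < ∑ i ∈ D, (i : ℝ) * q i / (δstar i + (i : ℝ) * v) :=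
    Finset.sum_lt_sum hterm ⟨k, hk, htermk⟩
  rw [hqsum, hsum] at hlt
  exact lt_irrefl 1 hlt
end

section
/- Let D be a finite set of positive integers, q : D → ℝ with q_k > 0 for all k ∈ D and Σ_{k∈D} q_k = 1, and let c_k > 0 for each k ∈ D. Let δ* be a degree-based equilibrium with v(δ*) > 0. If k ∈ D satisfies c_k < 1/k, then δ*_k > 0. -/
/-!
If `δ*_k = 0` then, since `v(δ*) > 0`, degree-`k` nodes are infected with probability one and pay
`J_k = 1`. Whatever the other degrees do, `v ≤ 1`, so a deviation to a curing rate `s > 0` yields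
`x_k ≤ k / (s + k)` and hence `J_k ≤ 1 - s / (s + k) + c_k s`, which is `< 1` as soon as
`c_k (s + k) < 1`. Because `c_k k < 1`, such an `s ∈ (0, 1/c_k]` exists, contradicting equilibrium.
-/

theorem vstar_le_one (D : Finset ℕ) (q δ : ℕ → ℝ) : vstar D q δ ≤ 1 := by
  unfold vstar
  split_ifs with h
  · exact h.choose_spec.1.2
  · exact zero_le_one

theorem xinf_eq_one_of_eq_zero {D : Finset ℕ} {q δ : ℕ → ℝ} {k : ℕ} (hk : 0 < (k : ℝ))
    (hv : 0 < vstar D q δ) (hδ : δ k = 0) : xinf D q δ k = 1 := by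
  rw [xinf, if_pos hv, hδ, zero_add, div_self (mul_pos hk hv).ne']

theorem xinf_le_div {D : Finset ℕ} {q δ : ℕ → ℝ} {k : ℕ} (hk : 0 < (k : ℝ)) (hδ : 0 ≤ δ k) :
    xinf D q δ k ≤ k / (δ k + k) := by
  unfold xinf
  split_ifs with hv
  · have hv1 := vstar_le_one D q δ
    rw [div_le_div_iff₀ (by positivity) (by positivity)]
    nlinarith [mul_nonneg (mul_nonneg hk.le hk.le) hδ]
  · positivity

theorem div_add_add_mul_lt_one {c k s : ℝ} (hk : 0 < k) (hs : 0 < s) (hcs : c * (s + k) < 1) :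
    k / (s + k) + c * s < 1 := by
  have hsk : 0 < s + k := by linarith
  rw [div_add' _ _ _ hsk.ne', div_lt_one hsk]
  nlinarith

theorem cost_lt_one {D : Finset ℕ} {q c δ : ℕ → ℝ} {k : ℕ} (hk : 0 < (k : ℝ)) (hδ : 0 < δ k)
    (hcδ : c k * (δ k + k) < 1) : cost D q c δ k < 1 :=
  calc cost D q c δ k ≤ k / (δ k + k) + c k * δ k := add_le_add_left (xinf_le_div hk hδ.le) _
    _ < 1 := div_add_add_mul_lt_one hk hδ hcδ

theorem dbe_positive_when_cost_low_general
    (D : Finset ℕ)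
    (q : ℕ → ℝ)
    (c : ℕ → ℝ) (hc : ∀ k ∈ D, 0 < c k)
    (δstar : ℕ → ℝ)
    (hfeas : ∀ k ∈ D, δstar k ∈ Set.Icc (0 : ℝ) (1 / c k))
    (hdbe : ∀ k ∈ D, ∀ s ∈ Set.Icc (0 : ℝ) (1 / c k),
      cost D q c δstar k ≤ cost D q c (Function.update δstar k s) k)
    (hv : 0 < vstar D q δstar) :
    ∀ k ∈ D, c k < 1 / (k : ℝ) → 0 < δstar k := by
  intro k hk hck
  have hc0 := hc k hk
  -- `1 / 0 = 0`, so `0 < c k < 1 / k` already forces `k ≠ 0`.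
  have hk0 : (0 : ℝ) < k := one_div_pos.mp (hc0.trans hck)
  by_contra hδ
  have hδ0 : δstar k = 0 := le_antisymm (not_lt.mp hδ) (hfeas k hk).1
  obtain ⟨s, hs0, hs⟩ := exists_between (sub_pos.mpr ((lt_one_div hc0 hk0).mp hck))
  have hdev := hdbe k hk s ⟨hs0.le, by linarith⟩
  have hcs : c k * (s + k) < 1 := (lt_div_iff₀' hc0).mp (by linarith)
  have hlt : cost D q c (Function.update δstar k s) k < 1 :=
    cost_lt_one hk0 (by rwa [Function.update_self]) (by rwa [Function.update_self])
  rw [cost, xinf_eq_one_of_eq_zero hk0 hv hδ0, hδ0, mul_zero, add_zero] at hdev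
  linarith

/-- At any degree-based equilibrium `δ*` with `v(δ*) > 0`, every
degree `k ∈ D` whose per-unit curing cost satisfies `c_k < 1/k` chooses a strictly
positive curing rate. -/
theorem dbe_positive_when_cost_low
    (D : Finset ℕ) (hD : ∀ k ∈ D, 0 < k)
    (q : ℕ → ℝ) (hq : ∀ k ∈ D, 0 < q k) (hqsum : ∑ k ∈ D, q k = 1)
    (c : ℕ → ℝ) (hc : ∀ k ∈ D, 0 < c k)
    (δstar : ℕ → ℝ)
    (hfeas : ∀ k ∈ D, δstar k ∈ Set.Icc (0 : ℝ) (1 / c k))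
    (hdbe : ∀ k ∈ D, ∀ s ∈ Set.Icc (0 : ℝ) (1 / c k),
      cost D q c δstar k ≤ cost D q c (Function.update δstar k s) k)
    (hv : 0 < vstar D q δstar) :
    ∀ k ∈ D, c k < 1 / (k : ℝ) → 0 < δstar k :=
  dbe_positive_when_cost_low_general D q c hc δstar hfeas hdbe hv
end

section
/- Let D be a finite set of positive integers and P : D → ℝ a degree distribution with P(i) ≥ 0 and Σ_{i∈D} P(i) = 1, such that ⟨d⟩ := Σ_{i∈D} i P(i) > 1, and set q_i := i P(i)/⟨d⟩. Fix z ∈ (0,1) and let c_0 > 1/(1 − z). Then for every curing-rate profile δ with δ_i ∈ [0, 1/c_0] for all i ∈ D, there exists a (unique) v ∈ (0,1] solving Σ_{i∈D} i q_i/(δ_i + i v) = 1, and this v satisfies v > z; moreover, for every k ∈ D, the infection probability x_k(δ) = k v/(δ_k + k v) satisfies x_k(δ) > z. -/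
/-- Let `P` be a degree distribution on the finite set of positive
degrees `D` with average degree `⟨d⟩ > 1`, and neighbor-degree weights
`q_i = i P(i) / ⟨d⟩`. Fix `z ∈ (0,1)` and a per-unit cost `c₀ > 1/(1-z)`. Then for
every curing-rate profile `δ` with `δ_i ∈ [0, 1/c₀]` for all `i ∈ D`, the consistency
equation `Σ_i i q_i / (δ_i + i v) = 1` has a unique solution `v ∈ (0,1]`, this solution
satisfies `v > z`, and the infection probability `x_k(δ) = k v / (δ_k + k v)` satisfies
`x_k(δ) > z` for every `k ∈ D`. -/
theorem infection_prob_bounded_below_when_cost_high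
    (D : Finset ℕ) (hD : ∀ i ∈ D, 0 < i)
    (P : ℕ → ℝ) (hP : ∀ i ∈ D, 0 ≤ P i) (hPsum : ∑ i ∈ D, P i = 1)
    (davg : ℝ) (hdavg : davg = ∑ i ∈ D, (i : ℝ) * P i) (hd1 : 1 < davg)
    (q : ℕ → ℝ) (hq : ∀ i, q i = (i : ℝ) * P i / davg)
    (z : ℝ) (hz : z ∈ Set.Ioo (0 : ℝ) 1)
    (c₀ : ℝ) (hc₀ : 1 / (1 - z) < c₀)
    (δ : ℕ → ℝ) (hδ : ∀ i ∈ D, δ i ∈ Set.Icc (0 : ℝ) (1 / c₀)) :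
    ∃ v : ℝ,
      (v ∈ Set.Ioc (0 : ℝ) 1 ∧ ∑ i ∈ D, (i : ℝ) * q i / (δ i + (i : ℝ) * v) = 1) ∧
      (∀ v' : ℝ, v' ∈ Set.Ioc (0 : ℝ) 1 →
        ∑ i ∈ D, (i : ℝ) * q i / (δ i + (i : ℝ) * v') = 1 → v' = v) ∧
      z < v ∧
      ∀ k ∈ D, z < (k : ℝ) * v / (δ k + (k : ℝ) * v) := by
  obtain ⟨hz0, hz1⟩ := hz
  have h1z : 0 < 1 - z := by linarith
  have hc0pos : 0 < c₀ := lt_trans (by positivity) hc₀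
  have h1 : 1 < c₀ * (1 - z) := (div_lt_iff₀ h1z).mp hc₀
  have hinv : 1 / c₀ < 1 - z := by rw [div_lt_iff₀ hc0pos]; nlinarith
  have hdpos : 0 < davg := by linarith
  have hqnn : ∀ i ∈ D, 0 ≤ q i := fun i hi => by
    rw [hq]
    exact div_nonneg (mul_nonneg (by positivity) (hP i hi)) hdpos.le
  have hqsum : ∑ i ∈ D, q i = 1 := by
    simp only [hq]
    rw [← Finset.sum_div, ← hdavg, div_self hdpos.ne']
  have hi1 : ∀ i ∈ D, (1 : ℝ) ≤ (i : ℝ) := fun i hi => by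
    exact_mod_cast hD i hi
  have hden : ∀ i ∈ D, ∀ v : ℝ, 0 < v → 0 < δ i + (i : ℝ) * v := fun i hi v hv => by
    have h1 := (hδ i hi).1
    have h2 := hi1 i hi
    nlinarith
  -- a degree with positive weight
  obtain ⟨j, hjD, hj⟩ : ∃ j ∈ D, 0 < q j := by
    obtain ⟨j, hjD, hj⟩ := Finset.exists_lt_of_sum_lt
      (show ∑ i ∈ D, (0 : ℝ) < ∑ i ∈ D, q i by simp [hqsum])
    exact ⟨j, hjD, hj⟩
  -- strict antitonicity
  have hanti : ∀ u w : ℝ, 0 < u → u < w →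
      ∑ i ∈ D, (i : ℝ) * q i / (δ i + (i : ℝ) * w) <
      ∑ i ∈ D, (i : ℝ) * q i / (δ i + (i : ℝ) * u) := by
    intro u w hu huw
    refine Finset.sum_lt_sum (fun i hi => ?_) ⟨j, hjD, ?_⟩
    · have hdu := hden i hi u hu
      have h1 := hi1 i hi
      have hqi := hqnn i hi
      gcongr <;> nlinarith
    · have hdu := hden j hjD u hu
      have h1 := hi1 j hjD
      have hqj : (0:ℝ) < (j : ℝ) * q j := by nlinarith
      gcongr <;> nlinarith
  -- value at z exceeds 1
  have hdltz : ∀ i ∈ D, δ i + (i : ℝ) * z < (i : ℝ) := fun i hi => by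
    have hub := (hδ i hi).2
    have h1 := hi1 i hi
    nlinarith [mul_nonneg (sub_nonneg.mpr h1) h1z.le]
  have hFz : 1 < ∑ i ∈ D, (i : ℝ) * q i / (δ i + (i : ℝ) * z) := by
    rw [← hqsum]
    refine Finset.sum_lt_sum (fun i hi => ?_) ⟨j, hjD, ?_⟩
    · have hd := hden i hi z hz0
      rw [le_div_iff₀ hd]
      nlinarith [hqnn i hi, hdltz i hi]
    · have hd := hden j hjD z hz0
      rw [lt_div_iff₀ hd]
      nlinarith [hdltz j hjD]
  -- value at 1 is at most 1
  have hF1 : ∑ i ∈ D, (i : ℝ) * q i / (δ i + (i : ℝ) * 1) ≤ 1 := by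
    refine le_trans (Finset.sum_le_sum (fun i hi => ?_)) (le_of_eq hqsum)
    have hd := hden i hi 1 one_pos
    rw [div_le_iff₀ hd]
    nlinarith [hqnn i hi, (hδ i hi).1]
  -- continuity
  have hcont : ContinuousOn (fun v => ∑ i ∈ D, (i : ℝ) * q i / (δ i + (i : ℝ) * v))
      (Set.Icc z 1) := by
    refine continuousOn_finset_sum _ (fun i hi => ?_)
    refine ContinuousOn.div continuousOn_const
      ((continuous_const.add (continuous_const.mul continuous_id)).continuousOn)
      (fun v hv => (hden i hi v (lt_of_lt_of_le hz0 hv.1)).ne')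
  obtain ⟨v, hvmem, hveq⟩ := intermediate_value_Icc' hz1.le hcont ⟨hF1, hFz.le⟩
  have hveq : ∑ i ∈ D, (i : ℝ) * q i / (δ i + (i : ℝ) * v) = 1 := hveq
  have hvz : z < v := by
    rcases lt_or_eq_of_le hvmem.1 with h | h
    · exact h
    · exfalso; rw [← h] at hveq; rw [hveq] at hFz; exact lt_irrefl 1 hFz
  have hv0 : 0 < v := lt_trans hz0 hvz
  refine ⟨v, ⟨⟨hv0, hvmem.2⟩, hveq⟩, ?_, hvz, ?_⟩
  · intro v' hv' heq'
    by_contra hne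
    rcases lt_or_gt_of_ne hne with h | h
    · have := hanti v' v hv'.1 h
      rw [hveq, heq'] at this; exact lt_irrefl 1 this
    · have := hanti v v' hv0 h
      rw [hveq, heq'] at this; exact lt_irrefl 1 this
  · intro k hk
    have hdk := hden k hk v hv0
    have h1 := hi1 k hk
    have hub := (hδ k hk).2
    rw [lt_div_iff₀ hdk]
    have hzkv : z < (k : ℝ) * v := by nlinarith
    nlinarith [mul_le_mul_of_nonneg_left hub hz0.le,
      mul_lt_mul_of_pos_left hinv hz0,
      mul_lt_mul_of_pos_right hzkv h1z]
end

section
/- Let w : [0,1] → ℝ be continuous on [0,1], differentiable on (0,1), strictly increasing, with w(0) = 0 and w(1) = 1. Suppose there exists x_m ∈ (0,1) such that w is strictly concave on [0, x_m] and strictly convex on [x_m, 1], w'(x_m) < 1, and w'(x) → ∞ as x → 0⁺ and as x → 1⁻. Then there exists a unique x_0 ∈ (0,1) with w(x_0) = x_0; moreover w(x) > x for all x ∈ (0, x_0) and w(x) < x for all x ∈ (x_0, 1). -/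
/-! Put `g = w - id`. It vanishes at `0` and `1`, is strictly concave on `[0, x_m]` and strictly
convex on `[x_m, 1]`. Comparing secant slopes through the zero at `0` on the concave part, and
through the zero at `1` on the convex part, shows that `g y ≥ 0` forces `g x > 0` for every
`0 < x < y < 1`: `g` changes sign at most once, from positive to negative. The blow-up of `w'` at
both endpoints, via the mean value theorem, makes `g` positive near `0` and negative near `1`,
so the intermediate value theorem supplies the crossing. -/

open Set Filter Topology

theorem StrictConcaveOn.pos_of_lt_of_nonneg {s : Set ℝ} {g : ℝ → ℝ}
    (hg : StrictConcaveOn ℝ s g) {a x y : ℝ} (ha : a ∈ s) (hx : x ∈ s) (hy : y ∈ s)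
    (hga : g a = 0) (hax : a < x) (hxy : x < y) (hgy : 0 ≤ g y) : 0 < g x := by
  have hslope := hg.secant_strict_mono ha hx hy hax.ne' (hax.trans hxy).ne' hxy
  rw [hga, sub_zero, sub_zero] at hslope
  have hgy' : 0 ≤ g y / (y - a) := div_nonneg hgy (by linarith)
  exact (div_pos_iff_of_pos_right (sub_pos.2 hax)).1 (hgy'.trans_lt hslope)

theorem StrictConvexOn.pos_of_lt_of_nonneg {s : Set ℝ} {g : ℝ → ℝ}
    (hg : StrictConvexOn ℝ s g) {b x y : ℝ} (hb : b ∈ s) (hx : x ∈ s) (hy : y ∈ s)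
    (hgb : g b = 0) (hxy : x < y) (hyb : y < b) (hgy : 0 ≤ g y) : 0 < g x := by
  have hslope := hg.secant_strict_mono hb hx hy (hxy.trans hyb).ne hyb.ne hxy
  rw [hgb, sub_zero, sub_zero] at hslope
  have hgy' : g y / (y - b) ≤ 0 := div_nonpos_of_nonneg_of_nonpos hgy (by linarith)
  simpa using (div_lt_iff_of_neg (sub_neg.2 (hxy.trans hyb))).1 (hslope.trans_le hgy')

theorem pos_of_lt_of_nonneg_of_concaveOn_convexOn {g : ℝ → ℝ} {a m b : ℝ}
    (hconc : StrictConcaveOn ℝ (Icc a m) g) (hconv : StrictConvexOn ℝ (Icc m b) g)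
    (hga : g a = 0) (hgb : g b = 0) {x y : ℝ} (hax : a < x) (hxy : x < y) (hyb : y < b)
    (hgy : 0 ≤ g y) : 0 < g x := by
  rcases le_or_gt y m with hym | hmy
  · exact hconc.pos_of_lt_of_nonneg ⟨le_rfl, by linarith⟩ ⟨hax.le, by linarith⟩
      ⟨by linarith, hym⟩ hga hax hxy hgy
  rcases le_or_gt m x with hmx | hxm
  · exact hconv.pos_of_lt_of_nonneg ⟨by linarith, le_rfl⟩ ⟨hmx, by linarith⟩
      ⟨hmy.le, hyb.le⟩ hgb hxy hyb hgy
  have hgm : 0 < g m := hconv.pos_of_lt_of_nonneg ⟨by linarith, le_rfl⟩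
    ⟨le_rfl, by linarith⟩ ⟨hmy.le, hyb.le⟩ hgb hmy hyb hgy
  exact hconc.pos_of_lt_of_nonneg ⟨le_rfl, by linarith⟩ ⟨hax.le, hxm.le⟩
    ⟨by linarith, le_rfl⟩ hga hax hxm hgm.le

theorem exists_unique_zero_of_concaveOn_convexOn {g : ℝ → ℝ} {a m b : ℝ}
    (hcont : ContinuousOn g (Icc a b))
    (hconc : StrictConcaveOn ℝ (Icc a m) g) (hconv : StrictConvexOn ℝ (Icc m b) g)
    (hga : g a = 0) (hgb : g b = 0) {p q : ℝ} (hp : p ∈ Ioo a b) (hq : q ∈ Ioo a b)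
    (hgp : 0 < g p) (hgq : g q < 0) :
    ∃ c ∈ Ioo a b, g c = 0 ∧ (∀ x ∈ Ioo a c, 0 < g x) ∧ (∀ x ∈ Ioo c b, g x < 0) ∧
      ∀ y ∈ Ioo a b, g y = 0 → y = c := by
  have hsign {x y : ℝ} (hax : a < x) (hxy : x < y) (hyb : y < b) (hgy : 0 ≤ g y) : 0 < g x :=
    pos_of_lt_of_nonneg_of_concaveOn_convexOn hconc hconv hga hgb hax hxy hyb hgy
  have hpq : p < q := lt_of_not_ge fun hqp => hgq.not_gt <|
    hsign hq.1 (hqp.lt_of_ne (by rintro rfl; linarith)) hp.2 hgp.le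
  obtain ⟨c, hc, hgc⟩ := intermediate_value_Ioo' hpq.le
    (hcont.mono (Icc_subset_Icc hp.1.le hq.2.le)) ⟨hgq, hgp⟩
  have hcab : c ∈ Ioo a b := ⟨hp.1.trans hc.1, hc.2.trans hq.2⟩
  refine ⟨c, hcab, hgc, fun x hx => hsign hx.1 hx.2 hcab.2 hgc.ge, fun x hx => ?_,
    fun y hy hgy => ?_⟩
  · exact lt_of_not_ge fun hgx => (hsign hcab.1 hx.1 hx.2 hgx).ne' hgc
  · rcases lt_trichotomy y c with hyc | rfl | hcy
    · exact absurd hgy (hsign hy.1 hyc hcab.2 hgc.ge).ne'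
    · rfl
    · exact absurd hgc (hsign hcab.1 hcy hy.2 hgy.ge).ne'

theorem eventually_lt_of_tendsto_deriv_nhdsGT_atTop {f f' : ℝ → ℝ} {a b : ℝ} (k : ℝ)
    (hab : a < b) (hf : ContinuousOn f (Icc a b)) (hf' : ∀ x ∈ Ioo a b, HasDerivAt f (f' x) x)
    (hlim : Tendsto f' (𝓝[>] a) atTop) : ∀ᶠ x in 𝓝[>] a, f a + k * (x - a) < f x := by
  obtain ⟨u, hau, hu⟩ := (nhdsGT_basis a).eventually_iff.1 (hlim.eventually_gt_atTop k)
  filter_upwards [Ioo_mem_nhdsGT (lt_min hau hab)] with x hx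
  have hxu : x < u := hx.2.trans_le (min_le_left _ _)
  have hxb : x < b := hx.2.trans_le (min_le_right _ _)
  obtain ⟨c, hc, hfc⟩ := exists_hasDerivAt_eq_slope f f' hx.1
    (hf.mono (Icc_subset_Icc le_rfl hxb.le)) fun y hy => hf' y ⟨hy.1, hy.2.trans hxb⟩
  have hslope : k < (f x - f a) / (x - a) := hfc ▸ hu ⟨hc.1, hc.2.trans hxu⟩
  rw [lt_div_iff₀ (sub_pos.2 hx.1)] at hslope
  linarith

theorem eventually_lt_of_tendsto_deriv_nhdsLT_atTop {f f' : ℝ → ℝ} {a b : ℝ} (k : ℝ)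
    (hab : a < b) (hf : ContinuousOn f (Icc a b)) (hf' : ∀ x ∈ Ioo a b, HasDerivAt f (f' x) x)
    (hlim : Tendsto f' (𝓝[<] b) atTop) : ∀ᶠ x in 𝓝[<] b, f x + k * (b - x) < f b := by
  obtain ⟨u, hub, hu⟩ := (nhdsLT_basis b).eventually_iff.1 (hlim.eventually_gt_atTop k)
  filter_upwards [Ioo_mem_nhdsLT (max_lt hub hab)] with x hx
  have hux : u < x := (le_max_left _ _).trans_lt hx.1
  have hax : a < x := (le_max_right _ _).trans_lt hx.1
  obtain ⟨c, hc, hfc⟩ := exists_hasDerivAt_eq_slope f f' hx.2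
    (hf.mono (Icc_subset_Icc hax.le le_rfl)) fun y hy => hf' y ⟨hax.trans hy.1, hy.2⟩
  have hslope : k < (f b - f x) / (b - x) := hfc ▸ hu ⟨hux.trans hc.1, hc.2⟩
  rw [lt_div_iff₀ (sub_pos.2 hx.2)] at hslope
  linarith

theorem weighting_function_unique_fixed_point_general
    (w w' : ℝ → ℝ)
    (hcont : ContinuousOn w (Set.Icc 0 1))
    (hderiv : ∀ x ∈ Set.Ioo (0 : ℝ) 1, HasDerivAt w (w' x) x)
    (hw0 : w 0 = 0) (hw1 : w 1 = 1)
    (xm : ℝ)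
    (hconc : StrictConcaveOn ℝ (Set.Icc 0 xm) w)
    (hconv : StrictConvexOn ℝ (Set.Icc xm 1) w)
    (hlim0 : Filter.Tendsto w' (nhdsWithin 0 (Set.Ioi 0)) Filter.atTop)
    (hlim1 : Filter.Tendsto w' (nhdsWithin 1 (Set.Iio 1)) Filter.atTop) :
    ∃ x₀ ∈ Set.Ioo (0 : ℝ) 1, w x₀ = x₀ ∧
      (∀ x ∈ Set.Ioo (0 : ℝ) x₀, x < w x) ∧
      (∀ x ∈ Set.Ioo x₀ (1 : ℝ), w x < x) ∧
      (∀ y ∈ Set.Ioo (0 : ℝ) 1, w y = y → y = x₀) := by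
  obtain ⟨p, hwp, hp⟩ := ((eventually_lt_of_tendsto_deriv_nhdsGT_atTop 1 one_pos hcont hderiv
    hlim0).and (Ioo_mem_nhdsGT one_pos)).exists
  obtain ⟨q, hwq, hq⟩ := ((eventually_lt_of_tendsto_deriv_nhdsLT_atTop 1 one_pos hcont hderiv
    hlim1).and (Ioo_mem_nhdsLT one_pos)).exists
  obtain ⟨c, hc, hwc, hleft, hright, huniq⟩ := exists_unique_zero_of_concaveOn_convexOn
    (g := w - id) (hcont.sub continuousOn_id) (hconc.sub_convexOn (convexOn_id (convex_Icc _ _)))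
    (hconv.sub_concaveOn (concaveOn_id (convex_Icc _ _))) (by simp [hw0]) (by simp [hw1]) hp hq
    (by rw [Pi.sub_apply, id, sub_pos]; linarith) (by rw [Pi.sub_apply, id, sub_neg]; linarith)
  refine ⟨c, hc, sub_eq_zero.1 hwc, fun x hx => sub_pos.1 (hleft x hx),
    fun x hx => sub_neg.1 (hright x hx), fun y hy hwy => huniq y hy (sub_eq_zero.2 hwy)⟩

/-- An inverse-S-shaped probability weighting function
`w : [0,1] → ℝ` (continuous on `[0,1]`, differentiable on `(0,1)` with derivative `w'`,
strictly increasing, `w(0) = 0`, `w(1) = 1`, strictly concave on `[0, x_m]` and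
strictly convex on `[x_m, 1]` for some `x_m ∈ (0,1)` with `w'(x_m) < 1`, and
`w'(x) → ∞` as `x → 0⁺` and as `x → 1⁻`) has a unique fixed point `x₀ ∈ (0,1)`;
moreover `w(x) > x` on `(0, x₀)` and `w(x) < x` on `(x₀, 1)`. -/
theorem weighting_function_unique_fixed_point
    (w w' : ℝ → ℝ)
    (hcont : ContinuousOn w (Set.Icc 0 1))
    (hderiv : ∀ x ∈ Set.Ioo (0 : ℝ) 1, HasDerivAt w (w' x) x)
    (hmono : StrictMonoOn w (Set.Icc 0 1))
    (hw0 : w 0 = 0) (hw1 : w 1 = 1)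
    (xm : ℝ) (hxm : xm ∈ Set.Ioo (0 : ℝ) 1)
    (hconc : StrictConcaveOn ℝ (Set.Icc 0 xm) w)
    (hconv : StrictConvexOn ℝ (Set.Icc xm 1) w)
    (hxm1 : w' xm < 1)
    (hlim0 : Filter.Tendsto w' (nhdsWithin 0 (Set.Ioi 0)) Filter.atTop)
    (hlim1 : Filter.Tendsto w' (nhdsWithin 1 (Set.Iio 1)) Filter.atTop) :
    ∃ x₀ ∈ Set.Ioo (0 : ℝ) 1, w x₀ = x₀ ∧
      (∀ x ∈ Set.Ioo (0 : ℝ) x₀, x < w x) ∧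
      (∀ x ∈ Set.Ioo x₀ (1 : ℝ), w x < x) ∧
      (∀ y ∈ Set.Ioo (0 : ℝ) 1, w y = y → y = x₀) :=
  weighting_function_unique_fixed_point_general w w' hcont hderiv hw0 hw1 xm hconc hconv hlim0 hlim1
end

section
/- For α ∈ (0,1), let w : [0,1] → ℝ be the Prelec probability weighting function defined by w(x) = exp(−(−ln x)^α) for x ∈ (0,1] and w(0) = 0. Then w is strictly concave on the interval (0, 1/e] and strictly convex on the interval [1/e, 1); in particular the inflection point of w is at x = 1/e, independent of α. -/
/-- The Prelec probability weighting function with parameter `α`: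
`w(x) = exp(-(-ln x)^α)` for `x ∈ (0,1]`, extended by `w(0) = 0`. -/
noncomputable def prelec (α : ℝ) (x : ℝ) : ℝ :=
  if x = 0 then 0 else Real.exp (-(-Real.log x) ^ α)

/-!
With `t = -log x`, the chain rule gives
`w''(x) = α w(x) t^α (α t^α + (1 - α) - t) / (x t)²`,
whose sign is that of `α t^α + (1 - α) - t`. For `0 < α < 1` this is negative when `t > 1`
(because `t^α < t`) and positive when `0 < t < 1` (because `t^α > t`); `t = 1` is `x = 1/e`.
-/

open Real Set Filter Topology

theorem mul_rpow_add_one_sub_lt_self {α t : ℝ} (hα₀ : 0 ≤ α) (hα₁ : α < 1) (ht : 1 < t) :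
    α * t ^ α + (1 - α) < t := by
  have h : t ^ α < t := by simpa using rpow_lt_rpow_of_exponent_lt ht hα₁
  nlinarith

theorem self_lt_mul_rpow_add_one_sub {α t : ℝ} (hα₀ : 0 ≤ α) (hα₁ : α < 1) (ht₀ : 0 < t)
    (ht₁ : t < 1) : t < α * t ^ α + (1 - α) := by
  have h : t < t ^ α := by simpa using rpow_lt_rpow_of_exponent_gt ht₀ ht₁ hα₁
  nlinarith

theorem prelec_pos (α : ℝ) {x : ℝ} (hx : x ≠ 0) : 0 < prelec α x := by
  rw [prelec, if_neg hx]
  exact exp_pos _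

theorem prelec_eventuallyEq {α x : ℝ} (hx : x ≠ 0) :
    prelec α =ᶠ[𝓝 x] fun y ↦ exp (-(-log y) ^ α) := by
  filter_upwards [eventually_ne_nhds hx] with y hy
  simp [prelec, hy]

theorem hasDerivAt_neg_log_rpow (α : ℝ) {x : ℝ} (hx : x ≠ 0) (hlog : log x ≠ 0) :
    HasDerivAt (fun y ↦ (-log y) ^ α) (-α * (-log x) ^ α / (x * -log x)) x := by
  refine ((hasDerivAt_log hx).neg.rpow_const (Or.inl (neg_ne_zero.2 hlog))).congr_deriv ?_
  rw [Pi.neg_apply, rpow_sub_one (neg_ne_zero.2 hlog)]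
  field_simp

theorem hasDerivAt_prelec (α : ℝ) {x : ℝ} (hx : x ≠ 0) (hlog : log x ≠ 0) :
    HasDerivAt (prelec α) (α * prelec α x * (-log x) ^ α / (x * -log x)) x := by
  refine ((hasDerivAt_neg_log_rpow α hx hlog).neg.exp.congr_of_eventuallyEq
    (prelec_eventuallyEq hx)).congr_deriv ?_
  rw [prelec, if_neg hx, Pi.neg_apply]
  ring

theorem deriv_prelec_eventuallyEq (α : ℝ) {x : ℝ} (hx : x ≠ 0) (hlog : log x ≠ 0) :
    deriv (prelec α) =ᶠ[𝓝 x] fun y ↦ α * prelec α y * (-log y) ^ α / (y * -log y) := by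
  filter_upwards [eventually_ne_nhds hx, (continuousAt_log hx).eventually_ne hlog]
    with y hy hly
  exact (hasDerivAt_prelec α hy hly).deriv

theorem deriv2_prelec (α : ℝ) {x : ℝ} (hx : x ≠ 0) (hlog : log x ≠ 0) :
    deriv^[2] (prelec α) x = α * prelec α x * (-log x) ^ α *
      (α * (-log x) ^ α + (1 - α) - -log x) / (x * -log x) ^ 2 := by
  have hden : HasDerivAt (fun y ↦ y * -log y) (1 * -log x + x * -x⁻¹) x :=
    (hasDerivAt_id x).mul (hasDerivAt_log hx).neg
  have h := ((((hasDerivAt_prelec α hx hlog).const_mul α).mul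
    (hasDerivAt_neg_log_rpow α hx hlog)).div hden
    (mul_ne_zero hx (neg_ne_zero.2 hlog))).congr_of_eventuallyEq
    (deriv_prelec_eventuallyEq α hx hlog)
  rw [Function.iterate_succ_apply, Function.iterate_one, h.deriv, Pi.mul_apply]
  field_simp
  ring

theorem deriv2_prelec_neg {α x : ℝ} (hα₀ : 0 < α) (hα₁ : α < 1)
    (hx : x ∈ Ioo 0 (exp (-1))) :
    deriv^[2] (prelec α) x < 0 := by
  have ht : 1 < -log x := by linarith [(log_lt_iff_lt_exp hx.1).2 hx.2]
  rw [deriv2_prelec α hx.1.ne' (by linarith)]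
  refine div_neg_of_neg_of_pos (mul_neg_of_pos_of_neg ?_ ?_) ?_
  · exact mul_pos (mul_pos hα₀ (prelec_pos α hx.1.ne')) (rpow_pos_of_pos (by linarith) α)
  · linarith [mul_rpow_add_one_sub_lt_self hα₀.le hα₁ ht]
  · exact pow_pos (mul_pos hx.1 (by linarith)) 2

theorem deriv2_prelec_pos {α x : ℝ} (hα₀ : 0 < α) (hα₁ : α < 1)
    (hx : x ∈ Ioo (exp (-1)) 1) :
    0 < deriv^[2] (prelec α) x := by
  have hx₀ : 0 < x := (exp_pos _).trans hx.1
  have ht₀ : 0 < -log x := neg_pos.2 (log_neg hx₀ hx.2)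
  have ht₁ : -log x < 1 := by linarith [(lt_log_iff_exp_lt hx₀).2 hx.1]
  rw [deriv2_prelec α hx₀.ne' (by linarith)]
  refine div_pos (mul_pos ?_ ?_) ?_
  · exact mul_pos (mul_pos hα₀ (prelec_pos α hx₀.ne')) (rpow_pos_of_pos ht₀ α)
  · linarith [self_lt_mul_rpow_add_one_sub hα₀.le hα₁ ht₀ ht₁]
  · exact pow_pos (mul_pos hx₀ ht₀) 2

theorem continuousOn_prelec (α : ℝ) : ContinuousOn (prelec α) (Ioo 0 1) := fun _ hx ↦
  (hasDerivAt_prelec α hx.1.ne' (log_neg hx.1 hx.2).ne).continuousAt.continuousWithinAt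

/-- For `α ∈ (0,1)`, the Prelec weighting function is strictly
concave on `(0, 1/e]` and strictly convex on `[1/e, 1)`; in particular its inflection
point is at `x = 1/e`, independent of `α`. -/
theorem prelec_strictConcave_strictConvex
    (α : ℝ) (hα : α ∈ Set.Ioo (0 : ℝ) 1) :
    StrictConcaveOn ℝ (Set.Ioc (0 : ℝ) (Real.exp (-1))) (prelec α) ∧
      StrictConvexOn ℝ (Set.Ico (Real.exp (-1)) 1) (prelec α) := by
  obtain ⟨hα₀, hα₁⟩ := hα
  have he : exp (-1) < 1 := exp_lt_one_iff.2 (by norm_num)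
  constructor
  · refine strictConcaveOn_of_deriv2_neg (convex_Ioc _ _) ((continuousOn_prelec α).mono ?_) ?_
    · exact fun x hx ↦ ⟨hx.1, hx.2.trans_lt he⟩
    · simpa only [interior_Ioc] using fun _ ↦ deriv2_prelec_neg hα₀ hα₁
  · refine strictConvexOn_of_deriv2_pos (convex_Ico _ _) ((continuousOn_prelec α).mono ?_) ?_
    · exact fun x hx ↦ ⟨(exp_pos _).trans_le hx.1, hx.2⟩
    · simpa only [interior_Ico] using fun _ ↦ deriv2_prelec_pos hα₀ hα₁
end

section
/- Let d ≥ 1 be an integer and let c > 1/d be the per-unit cost of curing rate. (i) The risk-neutral cost J(δ) = 1 − δ/d + cδ is strictly increasing on [0, 1/c], so its unique minimizer on [0, 1/c] is δ^N = 0, with minimum value 1. (ii) Let w : [0,1] → ℝ be continuous on [0,1], differentiable on (0,1), strictly increasing, with w(0) = 0, w(1) = 1, and suppose there exists x_m ∈ (0,1) such that w is strictly concave on [0, x_m], strictly convex on [x_m, 1], w'(x_m) < 1, and w'(x) → ∞ as x → 0⁺ and as x → 1⁻. Then there exists a unique X ∈ (x_m, 1) with w'(X) = dc, and the curing rate δ^W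 := min{1/c, d(1 − X)} minimizes the perceived cost J^w(δ) = w(1 − δ/d) + cδ over [0, 1/c], i.e. J^w(δ^W) ≤ J^w(δ) for every δ ∈ [0, 1/c]. -/
/-!
In the infection probability `x = 1 - δ / d` the perceived cost is `w x + k (1 - x)` with
`k = d c > 1`, so `g x = w x - k x` is to be minimized over `x ∈ [1 - 1/k, 1]`.
Since `w'(x_m) < 1 < k` and `w' → ∞` at `1`, Darboux gives `X ∈ (x_m, 1)` with `w'(X) = k`,
unique because `w'` is strictly increasing on the convex branch. There `g` lies above its
horizontal tangent at `X` and increases to the right of `X`, so `max (1 - 1/k) X` is optimal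
among `x ≥ x_m`. On the concave branch `g` is at least its value at an endpoint, and at the
left end `g (1 - 1/k) = w (1 - 1/k) - k + 1 > w 1 - k = g 1 ≥ g X`.
-/

open Set Filter Topology

theorem strictMono_one_sub_div_add_mul {d c : ℝ} (hc : 1 / d < c) :
    StrictMono fun δ : ℝ => 1 - δ / d + c * δ := by
  intro x y hxy
  have hslope : 0 < c - 1 / d := sub_pos.2 hc
  have hrw : ∀ δ : ℝ, 1 - δ / d + c * δ = 1 + (c - 1 / d) * δ := fun δ => by ring
  simp only [hrw]
  nlinarith

theorem ConvexOn.add_mul_sub_le_of_hasDerivAt {S : Set ℝ} {f : ℝ → ℝ} {f' x y : ℝ}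
    (hf : ConvexOn ℝ S f) (hx : x ∈ S) (hy : y ∈ S) (hd : HasDerivAt f f' x) :
    f x + f' * (y - x) ≤ f y := by
  rcases lt_trichotomy y x with hyx | rfl | hxy
  · have h := hf.slope_le_of_hasDerivAt hy hx hyx hd
    rw [slope_def_field, div_le_iff₀ (sub_pos.2 hyx)] at h
    linarith
  · simp
  · have h := hf.le_slope_of_hasDerivAt hx hy hxy hd
    rw [slope_def_field, le_div_iff₀ (sub_pos.2 hxy)] at h
    linarith

theorem ConvexOn.monotoneOn_of_hasDerivAt {S : Set ℝ} {f f' : ℝ → ℝ}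
    (hf : ConvexOn ℝ S f) (hd : ∀ x ∈ S, HasDerivAt f (f' x) x) : MonotoneOn f' S := by
  intro x hx y hy hxy
  rcases hxy.eq_or_lt with rfl | hxy
  · rfl
  exact (hf.le_slope_of_hasDerivAt hx hy hxy (hd x hx)).trans
    (hf.slope_le_of_hasDerivAt hx hy hxy (hd y hy))

theorem StrictConvexOn.strictMonoOn_of_hasDerivAt {S : Set ℝ} {f f' : ℝ → ℝ}
    (hf : StrictConvexOn ℝ S f) (hd : ∀ x ∈ S, HasDerivAt f (f' x) x) : StrictMonoOn f' S :=
  fun x hx y hy hxy => (hf.lt_slope_of_hasDerivAt hx hy hxy (hd x hx)).trans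
    (hf.slope_lt_of_hasDerivAt hx hy hxy (hd y hy))

theorem ConvexOn.sub_mul_max_le {f f' : ℝ → ℝ} {p q a X x : ℝ}
    (hf : ConvexOn ℝ (Icc p q) f) (hd : ∀ y ∈ Ioo p q, HasDerivAt f (f' y) y)
    (hX : X ∈ Ioo p q) (ha : a < q) (hx : x ∈ Icc p q) (hax : a ≤ x) :
    f (max a X) - f' X * max a X ≤ f x - f' X * x := by
  rcases le_or_gt a X with haX | hXa
  · rw [max_eq_right haX]
    linarith [hf.add_mul_sub_le_of_hasDerivAt (Ioo_subset_Icc_self hX) hx (hd X hX)]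
  · have ha' : a ∈ Ioo p q := ⟨hX.1.trans hXa, ha⟩
    have hmono : f' X ≤ f' a := (hf.subset Ioo_subset_Icc_self (convex_Ioo p q)
      ).monotoneOn_of_hasDerivAt hd hX ha' hXa.le
    have htangent := hf.add_mul_sub_le_of_hasDerivAt (Ioo_subset_Icc_self ha') hx (hd a ha')
    rw [max_eq_left hXa.le]
    nlinarith

theorem exists_mem_Ioo_hasDerivAt_eq_of_tendsto_atTop {f f' : ℝ → ℝ} {a b m : ℝ} (hab : a < b)
    (hd : ∀ x ∈ Ico a b, HasDerivAt f (f' x) x) (ha : f' a < m)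
    (hb : Tendsto f' (𝓝[<] b) atTop) : ∃ x ∈ Ioo a b, f' x = m := by
  obtain ⟨y, hmy, hay, hyb⟩ :=
    ((hb.eventually_gt_atTop m).and (Ioo_mem_nhdsLT hab)).exists
  obtain ⟨x, hx, hfx⟩ := exists_hasDerivWithinAt_eq_of_gt_of_lt hay.le
    (fun x hx => (hd x ⟨hx.1, hx.2.trans_lt hyb⟩).hasDerivWithinAt) ha hmy
  exact ⟨x, ⟨hx.1, hx.2.trans hyb⟩, hfx⟩

theorem sub_mul_max_le_of_concaveOn_of_convexOn {w w' : ℝ → ℝ} {xm k X x : ℝ}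
    (hmono : StrictMonoOn w (Icc 0 1)) (hw0 : w 0 = 0) (hw1 : w 1 = 1) (hxm : xm ∈ Ioo 0 1)
    (hconc : ConcaveOn ℝ (Icc 0 xm) w) (hconv : ConvexOn ℝ (Icc xm 1) w)
    (hd : ∀ y ∈ Ioo xm 1, HasDerivAt w (w' y) y) (hk : 1 < k) (hX : X ∈ Ioo xm 1)
    (hXk : w' X = k) (hx : x ∈ Icc (1 - 1 / k) 1) :
    w (max (1 - 1 / k) X) - k * max (1 - 1 / k) X ≤ w x - k * x := by
  set a := 1 - 1 / k
  have ha : a ∈ Ioo 0 1 := by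
    constructor
    · simp only [a, sub_pos]; exact (div_lt_one (by linarith)).2 hk
    · simp only [a, sub_lt_self_iff]; positivity
  rcases le_total xm x with hxmx | hxxm
  · exact hXk ▸ hconv.sub_mul_max_le hd hX ha.2 ⟨hxmx, hx.2⟩ hx.1
  have hXmin : ∀ y ∈ Icc xm 1, w X - k * X ≤ w y - k * y := fun y hy => by
    linarith [hconv.add_mul_sub_le_of_hasDerivAt (Ioo_subset_Icc_self hX) hy (hXk ▸ hd X hX)]
  have hwa : 0 < w a := hw0 ▸ hmono ⟨le_rfl, zero_le_one⟩ ⟨ha.1.le, ha.2.le⟩ ha.1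
  have hka : k * a = k - 1 := by simp only [a]; field_simp
  have hXa : w X - k * X ≤ w a - k * a := by linarith [hXmin 1 ⟨hxm.2.le, le_rfl⟩]
  have hgconc : ConcaveOn ℝ (Icc a xm) fun y => w y - k * y :=
    (hconc.subset (Icc_subset_Icc_left ha.1.le) (convex_Icc a xm)).sub
      ((convexOn_id (convex_Icc a xm)).smul (by linarith))
  have haxm : a ≤ xm := hx.1.trans hxxm
  have hseg := hgconc.ge_on_segment (left_mem_Icc.2 haxm) (right_mem_Icc.2 haxm)
    (by rw [segment_eq_Icc haxm]; exact ⟨hx.1, hxxm⟩)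
  rw [max_eq_right (haxm.trans hX.1.le)]
  exact (le_min hXa (hXmin xm ⟨le_rfl, hxm.2.le⟩)).trans hseg

theorem degree_regular_optimal_curing_rates_general
    (d : ℕ) (hd : 1 ≤ d) (c : ℝ) (hc : 1 / (d : ℝ) < c)
    (w w' : ℝ → ℝ)
    (hderiv : ∀ x ∈ Set.Ioo (0 : ℝ) 1, HasDerivAt w (w' x) x)
    (hmono : StrictMonoOn w (Set.Icc 0 1))
    (hw0 : w 0 = 0) (hw1 : w 1 = 1)
    (xm : ℝ) (hxm : xm ∈ Set.Ioo (0 : ℝ) 1)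
    (hconc : StrictConcaveOn ℝ (Set.Icc 0 xm) w)
    (hconv : StrictConvexOn ℝ (Set.Icc xm 1) w)
    (hxm1 : w' xm < 1)
    (hlim1 : Filter.Tendsto w' (nhdsWithin 1 (Set.Iio 1)) Filter.atTop) :
    (StrictMonoOn (fun δ : ℝ => 1 - δ / (d : ℝ) + c * δ) (Set.Icc 0 (1 / c)) ∧
      (∀ δ ∈ Set.Icc (0 : ℝ) (1 / c), δ ≠ 0 → 1 < 1 - δ / (d : ℝ) + c * δ)) ∧
    (∃ X ∈ Set.Ioo xm (1 : ℝ), w' X = (d : ℝ) * c ∧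
      (∀ Y ∈ Set.Ioo xm (1 : ℝ), w' Y = (d : ℝ) * c → Y = X) ∧
      (∀ δ ∈ Set.Icc (0 : ℝ) (1 / c),
        w (1 - min (1 / c) ((d : ℝ) * (1 - X)) / (d : ℝ))
            + c * min (1 / c) ((d : ℝ) * (1 - X))
          ≤ w (1 - δ / (d : ℝ)) + c * δ)) := by
  have hJ := strictMono_one_sub_div_add_mul hc
  refine ⟨⟨hJ.strictMonoOn _, fun δ hδ hδ0 => by simpa using hJ (hδ.1.lt_of_ne' hδ0)⟩, ?_⟩
  have hd0 : (0 : ℝ) < d := by exact_mod_cast hd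
  set k := (d : ℝ) * c
  have hk : 1 < k := by rwa [div_lt_iff₀' hd0] at hc
  have hd' : ∀ y ∈ Ioo xm 1, HasDerivAt w (w' y) y := fun y hy => hderiv y ⟨hxm.1.trans hy.1, hy.2⟩
  obtain ⟨X, hX, hXk⟩ := exists_mem_Ioo_hasDerivAt_eq_of_tendsto_atTop hxm.2
    (fun y hy => hderiv y ⟨hxm.1.trans_le hy.1, hy.2⟩) (hxm1.trans hk) hlim1
  refine ⟨X, hX, hXk, fun Y hY hYk => ?_, fun δ hδ => ?_⟩
  · exact ((hconv.subset Ioo_subset_Icc_self (convex_Ioo xm 1)).strictMonoOn_of_hasDerivAt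
      hd').injOn hY hX (hYk.trans hXk.symm)
  have hcost : ∀ δ : ℝ, w (1 - δ / d) + c * δ = w (1 - δ / d) - k * (1 - δ / d) + k := fun δ => by
    simp only [k]; field_simp; ring
  have hδW : 1 - min (1 / c) (d * (1 - X)) / d = max (1 - 1 / k) X := by
    rw [← min_div_div_right hd0.le, ← max_sub_sub_left, div_div, mul_div_cancel_left₀ _ hd0.ne',
      sub_sub_cancel, mul_comm]
  have hx : 1 - δ / d ∈ Icc (1 - 1 / k) 1 := by
    have : δ / d ≤ 1 / k := by
      calc δ / d ≤ 1 / c / d := by gcongr; exact hδ.2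
        _ = 1 / k := by rw [div_div, mul_comm]
    exact ⟨by linarith, by linarith [div_nonneg hδ.1 hd0.le]⟩
  have hmin := sub_mul_max_le_of_concaveOn_of_convexOn hmono hw0 hw1 hxm hconc.concaveOn
    hconv.convexOn hd' hk hX hXk hx
  rw [hcost, hcost, hδW]
  linarith

/-- In a degree-regular network of degree `d ≥ 1` with per-unit
curing cost `c > 1/d`, the endemic infection probability is `x_d = 1 - δ/d` for
`δ ∈ [0, 1/c]`.
(i) The risk-neutral cost `J(δ) = 1 - δ/d + cδ` is strictly increasing on `[0, 1/c]`,
so its unique minimizer there is `δ^N = 0`, with minimum value `1`.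
(ii) For an inverse-S-shaped weighting function `w` with derivative `w'` (inflection
point `x_m`, `w'(x_m) < 1`, unbounded derivative at both endpoints), there is a unique
`X ∈ (x_m, 1)` with `w'(X) = dc`, and `δ^W = min{1/c, d(1-X)}` minimizes the perceived
cost `J^w(δ) = w(1 - δ/d) + cδ` over `[0, 1/c]`. -/
theorem degree_regular_optimal_curing_rates
    (d : ℕ) (hd : 1 ≤ d) (c : ℝ) (hc : 1 / (d : ℝ) < c)
    (w w' : ℝ → ℝ)
    (hcont : ContinuousOn w (Set.Icc 0 1))
    (hderiv : ∀ x ∈ Set.Ioo (0 : ℝ) 1, HasDerivAt w (w' x) x)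
    (hmono : StrictMonoOn w (Set.Icc 0 1))
    (hw0 : w 0 = 0) (hw1 : w 1 = 1)
    (xm : ℝ) (hxm : xm ∈ Set.Ioo (0 : ℝ) 1)
    (hconc : StrictConcaveOn ℝ (Set.Icc 0 xm) w)
    (hconv : StrictConvexOn ℝ (Set.Icc xm 1) w)
    (hxm1 : w' xm < 1)
    (hlim0 : Filter.Tendsto w' (nhdsWithin 0 (Set.Ioi 0)) Filter.atTop)
    (hlim1 : Filter.Tendsto w' (nhdsWithin 1 (Set.Iio 1)) Filter.atTop) :
    (StrictMonoOn (fun δ : ℝ => 1 - δ / (d : ℝ) + c * δ) (Set.Icc 0 (1 / c)) ∧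
      (∀ δ ∈ Set.Icc (0 : ℝ) (1 / c), δ ≠ 0 → 1 < 1 - δ / (d : ℝ) + c * δ)) ∧
    (∃ X ∈ Set.Ioo xm (1 : ℝ), w' X = (d : ℝ) * c ∧
      (∀ Y ∈ Set.Ioo xm (1 : ℝ), w' Y = (d : ℝ) * c → Y = X) ∧
      (∀ δ ∈ Set.Icc (0 : ℝ) (1 / c),
        w (1 - min (1 / c) ((d : ℝ) * (1 - X)) / (d : ℝ))
            + c * min (1 / c) ((d : ℝ) * (1 - X))
          ≤ w (1 - δ / (d : ℝ)) + c * δ)) :=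
  degree_regular_optimal_curing_rates_general d hd c hc w w' hderiv hmono hw0 hw1 xm hxm hconc hconv
    hxm1 hlim1
end
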